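/- arXiv:math/0408417 — 8 statements merged into one kernel-verified Lean document; each statement's English description precedes it below -/
import Mathlib

section
/- Let M be a topological 2-manifold, i.e. a Hausdorff, second-countable topological space equipped with a charted-space structure modeled on the Euclidean plane (EuclideanSpace ℝ (Fin 2)). Then for every n ≥ 1 the n-th symmetric product SP^n(M) is a topological 2n-manifold: SP^n(M) is Hausdorff, second countable, and admits a charted-space structure modeled on EuclideanSpace ℝ (Fin (2*n)), i.e. every point has an open neighborhood homeomorphic to an open subset of ℝ^{2n}. -/
/-- The setoid on `Fin n → X` whose classes are orbits of the permutation action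
of `Equiv.Perm (Fin n)`. -/
def SPSetoid (n : ℕ) (X : Type*) : Setoid (Fin n → X) where
  r f g := ∃ σ : Equiv.Perm (Fin n), f ∘ σ = g
  iseqv := by
    constructor
    · exact fun f => ⟨Equiv.refl _, rfl⟩
    · rintro f g ⟨σ, rfl⟩
      exact ⟨σ.symm, by funext i; simp⟩
    · rintro f g h ⟨σ, rfl⟩ ⟨τ, rfl⟩
      exact ⟨τ.trans σ, by funext i; simp⟩

/-- The `n`-th symmetric product `SP^n(X) = X^n / S_n`, with the quotient topology. -/
def SP (n : ℕ) (X : Type*) [TopologicalSpace X] : Type _ :=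
  Quotient (SPSetoid n X)

instance (n : ℕ) (X : Type*) [TopologicalSpace X] : TopologicalSpace (SP n X) :=
  inferInstanceAs (TopologicalSpace (Quotient (SPSetoid n X)))

/-! Hausdorffness and second countability of `SP^n(X)` are inherited from `X^n` because the
quotient map is open and the orbit relation is a finite union of graphs of permutations.

For the charts, the points of a tuple in a surface `M` lie in finitely many pairwise disjoint
coordinate discs, and disjoint translates of these discs embed their union openly into `ℂ`.
`SP^n` takes open embeddings to open embeddings, so near that tuple `SP^n(M)` looks like an open
subset of `SP^n(ℂ)`. Finally `SP^n(ℂ) ≅ ℂ^n` by Vieta: an unordered tuple goes to the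
coefficients of the monic polynomial having it as roots. This is a continuous bijection by the
fundamental theorem of algebra, and a closed map because Cauchy's bound makes it proper. -/

open Topology Set Function

namespace SP

variable {n : ℕ} {X Y : Type*} [TopologicalSpace X] [TopologicalSpace Y]

def mk : (Fin n → X) → SP n X := Quotient.mk (SPSetoid n X)

lemma mk_surjective : Surjective (mk : (Fin n → X) → SP n X) :=
  Quotient.mk_surjective

lemma mk_eq_mk_iff {f g : Fin n → X} :
    mk f = mk g ↔ ∃ σ : Equiv.Perm (Fin n), f ∘ σ = g :=
  Quotient.eq

lemma isOpenQuotientMap_mk : IsOpenQuotientMap (mk : (Fin n → X) → SP n X) := by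
  refine ⟨mk_surjective, continuous_coinduced_rng, fun U hU => ?_⟩
  have hsat : mk ⁻¹' (mk '' U) = ⋃ σ : Equiv.Perm (Fin n), (· ∘ σ) ⁻¹' U := by
    ext f
    simp only [mem_preimage, mem_image, mem_iUnion]
    constructor
    · rintro ⟨u, hu, h⟩
      obtain ⟨σ, rfl⟩ := mk_eq_mk_iff.1 h.symm
      exact ⟨σ, hu⟩
    · rintro ⟨σ, hσ⟩
      exact ⟨_, hσ, (mk_eq_mk_iff.2 ⟨σ, rfl⟩).symm⟩
  change IsOpen (mk ⁻¹' (mk '' U))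
  rw [hsat]
  exact isOpen_iUnion fun σ => hU.preimage (continuous_pi fun i => continuous_apply (σ i))

instance [T2Space X] : T2Space (SP n X) := by
  rw [t2_iff_isClosed_diagonal,
    ← (isOpenQuotientMap_mk.prodMap isOpenQuotientMap_mk).isQuotientMap.isClosed_preimage]
  have hgraph : Prod.map mk mk ⁻¹' diagonal (SP n X) =
      ⋃ σ : Equiv.Perm (Fin n), {p : (Fin n → X) × (Fin n → X) | p.1 ∘ σ = p.2} := by
    ext p
    simp [mk_eq_mk_iff]
  rw [hgraph]
  exact isClosed_iUnion_of_finite fun σ =>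
    isClosed_eq (continuous_pi fun i => (continuous_apply (σ i)).comp continuous_fst)
      continuous_snd

instance [SecondCountableTopology X] : SecondCountableTopology (SP n X) :=
  isOpenQuotientMap_mk.isQuotientMap.secondCountableTopology isOpenQuotientMap_mk.isOpenMap

def map (φ : X → Y) : SP n X → SP n Y :=
  Quotient.map (φ ∘ ·) (by rintro f _ ⟨σ, rfl⟩; exact ⟨σ, rfl⟩)

lemma map_mk (φ : X → Y) (f : Fin n → X) : map φ (mk f) = mk (φ ∘ f) := rfl

lemma isOpenEmbedding_map {φ : X → Y} (hφ : IsOpenEmbedding φ) :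
    IsOpenEmbedding (map (n := n) φ) := by
  have hpi : IsOpenEmbedding (φ ∘ · : (Fin n → X) → Fin n → Y) := .piMap fun _ => hφ
  refine .of_continuous_injective_isOpenMap ?_ ?_ ?_
  · exact isOpenQuotientMap_mk.isQuotientMap.continuous_iff.2
      (isOpenQuotientMap_mk.continuous.comp hpi.continuous)
  · intro a b h
    obtain ⟨f, rfl⟩ := mk_surjective a
    obtain ⟨g, rfl⟩ := mk_surjective b
    obtain ⟨σ, hσ⟩ := mk_eq_mk_iff.1 h
    exact mk_eq_mk_iff.2 ⟨σ, hpi.injective hσ⟩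
  · intro O hO
    rw [← mk_surjective.image_preimage O, image_image]
    simp only [map_mk]
    rw [← image_image mk (φ ∘ ·)]
    exact isOpenQuotientMap_mk.isOpenMap _
      (hpi.isOpenMap _ (hO.preimage isOpenQuotientMap_mk.continuous))

lemma exists_openPartialHomeomorph_mem_source {W : Set X} (hW : IsOpen W) {e : W → Y}
    (he : IsOpenEmbedding e) {f : Fin n → X} (hf : ∀ i, f i ∈ W) :
    ∃ c : OpenPartialHomeomorph (SP n X) (SP n Y), mk f ∈ c.source := by
  let f' : Fin n → W := fun i => ⟨f i, hf i⟩
  have : Nonempty (SP n W) := ⟨mk f'⟩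
  let incl := (isOpenEmbedding_map (n := n) hW.isOpenEmbedding_subtypeVal).toOpenPartialHomeomorph _
  refine ⟨incl.symm.trans ((isOpenEmbedding_map he).toOpenPartialHomeomorph _), ?_⟩
  simp only [OpenPartialHomeomorph.trans_source, OpenPartialHomeomorph.symm_source,
    IsOpenEmbedding.toOpenPartialHomeomorph_source, preimage_univ, inter_univ]
  exact ⟨mk f', mem_univ _, rfl⟩

end SP

lemma Multiset.exists_map_univ_eq {n : ℕ} {α : Type*} {m : Multiset α}
    (hm : Multiset.card m = n) : ∃ g : Fin n → α, Finset.univ.val.map g = m := by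
  obtain ⟨l, rfl⟩ : ∃ l : List α, (l : Multiset α) = m := Quot.exists_rep m
  rw [Multiset.coe_card] at hm
  subst hm
  exact ⟨l.get, by rw [Fin.univ_val_map, List.ofFn_get]⟩

lemma exists_comp_perm_eq_of_map_univ_eq {n : ℕ} {α : Type*} {f g : Fin n → α}
    (h : Finset.univ.val.map f = Finset.univ.val.map g) :
    ∃ σ : Equiv.Perm (Fin n), f ∘ σ = g := by
  classical
  have hcard (a : α) : Fintype.card {i // g i = a} = Fintype.card {i // f i = a} := by
    have := congrArg (Multiset.count a) h
    rw [Multiset.count_map, Multiset.count_map] at this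
    simp only [← Finset.filter_val, Finset.card_val] at this
    rw [Fintype.card_subtype, Fintype.card_subtype]
    convert this.symm using 2 <;> · ext i; simp [eq_comm]
  let e (a : α) : {i // g i = a} ≃ {i // f i = a} := Fintype.equivOfCardEq (hcard a)
  refine ⟨(Equiv.sigmaFiberEquiv g).symm.trans
    ((Equiv.sigmaCongrRight e).trans (Equiv.sigmaFiberEquiv f)), funext fun i => ?_⟩
  exact ((e (g i)) ⟨i, rfl⟩).2

section Vieta

open Polynomial

variable {n : ℕ}

noncomputable def vietaCoeffs (g : Fin n → ℂ) : Fin n → ℂ :=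
  fun i => (∏ j, (X - C (g j))).coeff i

lemma prod_X_sub_C_eq_multiset_prod (g : Fin n → ℂ) :
    ∏ j, (X - C (g j)) = ((Finset.univ.val.map g).map (X - C ·)).prod := by
  rw [Multiset.map_map]
  rfl

lemma prod_X_sub_C_eq_X_pow_add (g : Fin n → ℂ) :
    ∏ j, (X - C (g j)) = X ^ n + ∑ i : Fin n, C (vietaCoeffs g i) * X ^ (i : ℕ) := by
  have h := (monic_prod_X_sub_C g Finset.univ).as_sum
  rw [natDegree_finsetProd_X_sub_C_eq_card, Finset.card_univ, Fintype.card_fin,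
    ← Fin.sum_univ_eq_sum_range] at h
  exact h

lemma coeff_X_pow_add_sum (v : Fin n → ℂ) (i : Fin n) :
    (X ^ n + ∑ j : Fin n, C (v j) * X ^ (j : ℕ)).coeff i = v i := by
  simp [coeff_X_pow, i.is_lt.ne, Fin.val_eq_val]

lemma continuous_vietaCoeffs : Continuous (vietaCoeffs (n := n)) := by
  refine continuous_pi fun i => ?_
  have hesymm (g : Fin n → ℂ) : vietaCoeffs g i = (-1) ^ (n - i) *
      ∑ t ∈ Finset.powersetCard (n - i) Finset.univ, ∏ j ∈ t, g j := by
    rw [vietaCoeffs, prod_X_sub_C_eq_multiset_prod,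
      Multiset.prod_X_sub_C_coeff _ (by simp [i.is_le']), Finset.esymm_map_val]
    simp
  simp only [hesymm]
  fun_prop

lemma vietaCoeffs_comp_perm (g : Fin n → ℂ) (σ : Equiv.Perm (Fin n)) :
    vietaCoeffs (g ∘ σ) = vietaCoeffs g := by
  unfold vietaCoeffs
  simp only [Function.comp_apply, Equiv.prod_comp σ fun j => X - C (g j)]

lemma exists_comp_perm_eq_of_vietaCoeffs_eq {f g : Fin n → ℂ}
    (h : vietaCoeffs f = vietaCoeffs g) : ∃ σ : Equiv.Perm (Fin n), f ∘ σ = g := by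
  have hprod : ∏ j, (X - C (f j)) = ∏ j, (X - C (g j)) := by
    rw [prod_X_sub_C_eq_X_pow_add, prod_X_sub_C_eq_X_pow_add, h]
  apply exists_comp_perm_eq_of_map_univ_eq
  simpa only [prod_X_sub_C_eq_multiset_prod, roots_multiset_prod_X_sub_C] using
    congrArg roots hprod

lemma vietaCoeffs_surjective : Surjective (vietaCoeffs (n := n)) := by
  intro v
  set P : ℂ[X] := X ^ n + ∑ j : Fin n, C (v j) * X ^ (j : ℕ)
  have hP : P.Monic := monic_X_pow_add (degree_sum_fin_lt v)
  have hsplits : P.Splits := IsAlgClosed.splits P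
  have hcard : Multiset.card P.roots = n := by
    rw [splits_iff_card_roots.1 hsplits, natDegree_add_eq_left_of_degree_lt, natDegree_X_pow]
    simp [degree_sum_fin_lt v]
  obtain ⟨g, hg⟩ := Multiset.exists_map_univ_eq hcard
  refine ⟨g, funext fun i => ?_⟩
  rw [vietaCoeffs, prod_X_sub_C_eq_multiset_prod, hg, ← hsplits.eq_prod_roots_of_monic hP,
    coeff_X_pow_add_sum]

lemma norm_le_norm_vietaCoeffs_add_one (g : Fin n → ℂ) (j : Fin n) :
    ‖g j‖ ≤ ‖vietaCoeffs g‖ + 1 := by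
  have hmonic := monic_prod_X_sub_C g Finset.univ
  have hroot : ‖g j‖₊ < (∏ j, (X - C (g j))).cauchyBound :=
    IsRoot.norm_lt_cauchyBound hmonic.ne_zero <| by
      simp [IsRoot, eval_prod, Finset.prod_eq_zero (Finset.mem_univ j)]
  have hbound : (∏ j, (X - C (g j))).cauchyBound ≤ ‖vietaCoeffs g‖₊ + 1 := by
    rw [cauchyBound, hmonic.leadingCoeff, nnnorm_one, div_one,
      natDegree_finsetProd_X_sub_C_eq_card, Finset.card_univ, Fintype.card_fin]
    gcongr
    exact Finset.sup_le fun i hi =>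
      nnnorm_le_pi_nnnorm (vietaCoeffs g) ⟨i, Finset.mem_range.1 hi⟩
  exact_mod_cast (hroot.trans_le hbound).le

lemma isProperMap_vietaCoeffs : IsProperMap (vietaCoeffs (n := n)) := by
  refine isProperMap_iff_isCompact_preimage.2 ⟨continuous_vietaCoeffs, fun K hK => ?_⟩
  obtain ⟨R, hR⟩ := hK.isBounded.exists_norm_le
  refine Metric.isCompact_of_isClosed_isBounded (hK.isClosed.preimage continuous_vietaCoeffs) ?_
  refine isBounded_iff_forall_norm_le.2
    ⟨R + 1, fun g hg => (pi_norm_le_iff_of_nonneg ?_).2 fun j => ?_⟩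
  · linarith [hR _ hg, norm_nonneg (vietaCoeffs g)]
  · linarith [hR _ hg, norm_le_norm_vietaCoeffs_add_one g j]

end Vieta

namespace SP

variable {n : ℕ}

noncomputable def coeffs : SP n ℂ → (Fin n → ℂ) :=
  Quotient.lift vietaCoeffs fun f _ ⟨σ, hσ⟩ => hσ ▸ (vietaCoeffs_comp_perm f σ).symm

lemma coeffs_bijective : Bijective (coeffs (n := n)) := by
  refine ⟨fun a b h => ?_, fun v => ?_⟩
  · obtain ⟨f, rfl⟩ := mk_surjective a
    obtain ⟨g, rfl⟩ := mk_surjective b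
    exact mk_eq_mk_iff.2 (exists_comp_perm_eq_of_vietaCoeffs_eq h)
  · obtain ⟨g, hg⟩ := vietaCoeffs_surjective v
    exact ⟨mk g, hg⟩

noncomputable def vieta : SP n ℂ ≃ₜ (Fin n → ℂ) :=
  (Equiv.ofBijective _ coeffs_bijective).toHomeomorphOfContinuousClosed
    (isOpenQuotientMap_mk.isQuotientMap.continuous_iff.2 continuous_vietaCoeffs)
    fun C hC => by
      rw [← mk_surjective.image_preimage C, image_image]
      exact isProperMap_vietaCoeffs.isClosedMap _ (hC.preimage isOpenQuotientMap_mk.continuous)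

end SP

lemma Topology.IsOpenEmbedding.sigma_desc {ι Z : Type*} {σ : ι → Type*}
    [∀ i, TopologicalSpace (σ i)] [TopologicalSpace Z] {f : ∀ i, σ i → Z}
    (hf : ∀ i, IsOpenEmbedding (f i)) (hd : Pairwise (Disjoint on fun i => range (f i))) :
    IsOpenEmbedding (fun p : Sigma σ => f p.1 p.2) := by
  refine .of_continuous_injective_isOpenMap (continuous_sigma fun i => (hf i).continuous) ?_
    (isOpenMap_sigma.2 fun i => (hf i).isOpenMap)
  rintro ⟨i, a⟩ ⟨j, b⟩ h
  obtain rfl : i = j := by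
    by_contra hij
    exact disjoint_left.1 (hd hij) ⟨a, rfl⟩ ⟨b, h.symm⟩
  exact congrArg (Sigma.mk i) ((hf i).injective h)

namespace ChartedSpace

variable {E M : Type*} [NormedAddCommGroup E] [TopologicalSpace M] [ChartedSpace E M]

lemma exists_isOpenEmbedding_ball (x : M) {U : Set M} (hU : IsOpen U) (hx : x ∈ U) (c : E)
    {r : ℝ} (hr : 0 < r) :
    ∃ D : Set M, IsOpen D ∧ x ∈ D ∧ D ⊆ U ∧
      ∃ e : D → E, IsOpenEmbedding e ∧ range e ⊆ Metric.ball c r := by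
  set φ := chartAt E x
  set D := U ∩ (φ.source ∩ φ ⁻¹' Metric.ball (φ x) r)
  have hD : IsOpen D := hU.inter (φ.isOpen_inter_preimage Metric.isOpen_ball)
  have hDs : D ⊆ φ.source := fun y hy => hy.2.1
  have hincl : IsOpenEmbedding (inclusion hDs) :=
    .of_comp _ φ.open_source.isOpenEmbedding_subtypeVal hD.isOpenEmbedding_subtypeVal
  refine ⟨D, hD, ⟨hx, mem_chart_source E x, by simpa using hr⟩, inter_subset_left,
    fun y => φ y - φ x + c, ?_, ?_⟩
  · exact ((Homeomorph.subRight (φ x)).trans (Homeomorph.addRight c)).isOpenEmbedding.comp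
      (φ.isOpenEmbedding_restrict.comp hincl)
  · rintro _ ⟨y, rfl⟩
    simpa [dist_eq_norm] using y.2.2.2

lemma exists_isOpenEmbedding_of_finite [NormedSpace ℝ E] [Nontrivial E] [T2Space M]
    {s : Set M} (hs : s.Finite) :
    ∃ W : Set M, IsOpen W ∧ s ⊆ W ∧ ∃ e : W → E, IsOpenEmbedding e := by
  obtain ⟨U, hU, hUdisj⟩ := hs.t2_separation
  obtain ⟨v, hv⟩ := exists_ne (0 : E)
  have : Countable s := hs.countable.to_subtype
  obtain ⟨ι, hι⟩ := Countable.exists_injective_nat s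
  have hballs : Pairwise fun y y' : s => Disjoint (Metric.ball ((ι y : ℝ) • v) (‖v‖ / 2))
      (Metric.ball ((ι y' : ℝ) • v) (‖v‖ / 2)) := by
    intro y y' hne
    have hgap : (1 : ℤ) ≤ |(ι y : ℤ) - ι y'| :=
      Int.one_le_abs (sub_ne_zero.2 (by exact_mod_cast hι.ne hne))
    have hgap' : (1 : ℝ) ≤ |(ι y : ℝ) - ι y'| := by exact_mod_cast hgap
    refine Metric.ball_disjoint_ball ?_
    rw [dist_eq_norm, ← sub_smul, norm_smul, Real.norm_eq_abs]
    nlinarith [norm_nonneg v]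
  choose D hDo hyD hDU e he her using fun y : s =>
    exists_isOpenEmbedding_ball (y : M) (hU y).2 (hU y).1 ((ι y : ℝ) • v)
      (half_pos (norm_pos_iff.2 hv))
  have hj := IsOpenEmbedding.sigma_desc (fun y => (hDo y).isOpenEmbedding_subtypeVal)
    fun y y' hne => by
      simpa only [Subtype.range_coe] using
        (hUdisj y.2 y'.2 (Subtype.coe_injective.ne hne)).mono (hDU y) (hDU y')
  have hk := IsOpenEmbedding.sigma_desc he fun y y' hne => (hballs hne).mono (her y) (her y')
  exact ⟨_, hj.isOpen_range, fun y hy => ⟨⟨⟨y, hy⟩, ⟨y, hyD _⟩⟩, rfl⟩, _,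
    hk.comp hj.isEmbedding.toHomeomorph.symm.isOpenEmbedding⟩

end ChartedSpace


theorem SP_of_surface_is_manifold_general
    (M : Type*) [TopologicalSpace M] [T2Space M] [SecondCountableTopology M]
    [ChartedSpace (EuclideanSpace ℝ (Fin 2)) M] (n : ℕ) :
    T2Space (SP n M) ∧ SecondCountableTopology (SP n M) ∧
      Nonempty (ChartedSpace (EuclideanSpace ℝ (Fin (2 * n))) (SP n M)) := by
  refine ⟨inferInstance, inferInstance, ?_⟩
  let toPlane : EuclideanSpace ℝ (Fin 2) ≃ₜ ℂ :=
    Complex.orthonormalBasisOneI.repr.symm.toHomeomorph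
  have hdim : Module.finrank ℝ (Fin n → ℂ) =
      Module.finrank ℝ (EuclideanSpace ℝ (Fin (2 * n))) := by
    simp [Module.finrank_pi_fintype, mul_comm]
  let toEuclidean := (ContinuousLinearEquiv.ofFinrankEq hdim).toHomeomorph
  have hchart (x : SP n M) :
      ∃ c : OpenPartialHomeomorph (SP n M) (EuclideanSpace ℝ (Fin (2 * n))),
        x ∈ c.source := by
    obtain ⟨f, rfl⟩ := SP.mk_surjective x
    obtain ⟨W, hW, hfW, e, he⟩ := ChartedSpace.exists_isOpenEmbedding_of_finite
      (E := EuclideanSpace ℝ (Fin 2)) (finite_range f)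
    obtain ⟨c, hc⟩ := SP.exists_openPartialHomeomorph_mem_source hW
      (toPlane.isOpenEmbedding.comp he) fun i => hfW ⟨i, rfl⟩
    exact ⟨c.transHomeomorph (SP.vieta.trans toEuclidean), hc⟩
  choose chart hchart using hchart
  exact ⟨{ atlas := range chart, chartAt := chart, mem_chart_source := hchart,
            chart_mem_atlas := mem_range_self }⟩

/-- If `M` is a topological 2-manifold (Hausdorff, second countable, charted on the
Euclidean plane), then for every `n ≥ 1` the symmetric product `SP^n(M)` is a
topological `2n`-manifold: Hausdorff, second countable, and admitting a charted
space structure modeled on `EuclideanSpace ℝ (Fin (2*n))`. -/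
theorem SP_of_surface_is_manifold
    (M : Type*) [TopologicalSpace M] [T2Space M] [SecondCountableTopology M]
    [ChartedSpace (EuclideanSpace ℝ (Fin 2)) M] (n : ℕ) (hn : 1 ≤ n) :
    T2Space (SP n M) ∧ SecondCountableTopology (SP n M) ∧
      Nonempty (ChartedSpace (EuclideanSpace ℝ (Fin (2 * n))) (SP n M)) :=
  SP_of_surface_is_manifold_general M n
end

section
/- For every n ≥ 1, the n-th symmetric product SP^n([0,1]) of the closed unit interval [0,1] ⊆ ℝ is homeomorphic to the standard n-simplex, i.e. to stdSimplex ℝ (Fin (n+1)) = { x : Fin (n+1) → ℝ | (∀ i, 0 ≤ x i) ∧ ∑ i, x i = 1 } with its subspace topology. A homeomorphism is induced by sending an unordered n-tuple 0 ≤ x₁ ≤ ... ≤ xₙ ≤ 1 (its sorted representative) to the vector of consecutive differences (x₁, x₂ − x₁, ..., xₙ − x_{n−1}, 1 − xₙ). -/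
/-!
Partial sums `y ↦ (y₀, y₀ + y₁, …, y₀ + ⋯ + y_{n-1})` send the `n`-simplex continuously onto the
nondecreasing `n`-tuples in `[0,1]`, with consecutive differences of `(0, x₁, …, xₙ, 1)` as inverse.
Every orbit in `[0,1]ⁿ` contains exactly one nondecreasing tuple (its sorting), so composing with
the quotient map gives a continuous bijection from the simplex onto `SP^n([0,1])`; the simplex is
compact and `SP^n([0,1])`, the quotient of a locally compact Hausdorff space by a finite group, is
Hausdorff, so this bijection is a homeomorphism.
-/

namespace Fin

variable {n : ℕ}

theorem monotone_cons {α : Type*} [Preorder α] {a : α} {f : Fin n → α} (hf : Monotone f)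
    (ha : ∀ i, a ≤ f i) : Monotone (Fin.cons a f : Fin (n + 1) → α) := by
  intro i j hij
  cases j using Fin.cases with
  | zero => rw [Fin.le_zero_iff.mp hij]
  | succ j =>
    cases i using Fin.cases with
    | zero => simpa using ha j
    | succ i => simpa using hf (Fin.succ_le_succ_iff.mp hij)

theorem monotone_snoc {α : Type*} [Preorder α] {a : α} {f : Fin n → α} (hf : Monotone f)
    (ha : ∀ i, f i ≤ a) : Monotone (Fin.snoc f a : Fin (n + 1) → α) := by
  intro i j hij
  cases i using Fin.lastCases with
  | last => rw [Fin.last_le_iff.mp hij]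
  | cast i =>
    cases j using Fin.lastCases with
    | last => simpa using ha i
    | cast j => simpa using hf (Fin.castSucc_le_castSucc_iff.mp hij)

theorem partialSum_last {M : Type*} [AddCommMonoid M] (f : Fin n → M) :
    partialSum f (last n) = ∑ i, f i := by
  rw [partialSum, val_last, List.take_of_length_le (List.length_ofFn).le, List.sum_ofFn]

theorem partialSum_sub_castSucc {G : Type*} [AddCommGroup G] (f : Fin n → G) (i : Fin n) :
    partialSum f i.succ - partialSum f i.castSucc = f i := by
  rw [partialSum_succ, add_sub_cancel_left]

theorem partialSum_succ_sub_castSucc {G : Type*} [AddCommGroup G] (x : Fin (n + 1) → G) :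
    partialSum (fun i => x i.succ - x i.castSucc) = fun i => x i - x 0 := by
  funext i
  rw [eq_sub_iff_add_eq']
  simpa only [neg_add_eq_sub, Pi.vadd_apply, vadd_eq_add] using congrFun (partialSum_left_neg x) i

theorem monotone_partialSum {M : Type*} [AddMonoid M] [Preorder M] [AddLeftMono M] {f : Fin n → M}
    (hf : 0 ≤ f) : Monotone (partialSum f) :=
  Fin.monotone_iff_le_succ.mpr fun i => by
    rw [partialSum_succ]; exact le_add_of_nonneg_right (hf i)

theorem continuous_partialSum {M : Type*} [AddMonoid M] [TopologicalSpace M] [ContinuousAdd M] :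
    Continuous (partialSum : (Fin n → M) → Fin (n + 1) → M) :=
  continuous_pi fun i => by
    induction i using Fin.induction with
    | zero => simpa using continuous_const
    | succ i ih => simp only [partialSum_succ]; exact ih.add (continuous_apply i)

end Fin

namespace SPSetoid

variable {n : ℕ} {X : Type*}

attribute [local instance] arrowAction in
theorem eq_orbitRel : SPSetoid n X = MulAction.orbitRel (Equiv.Perm (Fin n)) (Fin n → X) := by
  ext f g
  rw [MulAction.orbitRel_apply, MulAction.mem_orbit_iff]
  constructor
  · rintro ⟨σ, rfl⟩
    exact ⟨σ, funext fun i => congrArg f (σ.apply_symm_apply i)⟩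
  · rintro ⟨σ, rfl⟩
    exact ⟨σ, funext fun i => congrArg g (σ.symm_apply_apply i)⟩

theorem exists_monotone_mk_eq [LinearOrder X] (q : Quotient (SPSetoid n X)) :
    ∃ f : Fin n → X, Monotone f ∧ Quotient.mk _ f = q := by
  induction q using Quotient.inductionOn with
  | h f =>
    exact ⟨f ∘ Tuple.sort f, Tuple.monotone_sort f,
      (Quotient.sound (s := SPSetoid n X) ⟨Tuple.sort f, rfl⟩).symm⟩

theorem eq_of_mk_eq_of_monotone [PartialOrder X] {f g : Fin n → X} (hf : Monotone f)
    (hg : Monotone g) (h : Quotient.mk (SPSetoid n X) f = Quotient.mk _ g) : f = g := by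
  obtain ⟨σ, rfl⟩ := Quotient.exact h
  exact (Tuple.unique_monotone (τ := 1) hg hf).symm

end SPSetoid

attribute [local instance] arrowAction in
instance {n : ℕ} {X : Type*} [TopologicalSpace X] [T2Space X] [LocallyCompactSpace X] :
    T2Space (SP n X) := by
  have : ContinuousConstSMul (Equiv.Perm (Fin n)) (Fin n → X) :=
    ⟨fun σ => continuous_pi fun i => continuous_apply (σ⁻¹ • i)⟩
  change T2Space (Quotient (SPSetoid n X))
  rw [SPSetoid.eq_orbitRel]
  infer_instance

theorem stdSimplex.partialSum_mem_Icc {𝕜 : Type*} [Semiring 𝕜] [PartialOrder 𝕜]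
    [IsOrderedAddMonoid 𝕜] {m : ℕ} {y : Fin m → 𝕜} (hy : y ∈ stdSimplex 𝕜 (Fin m))
    (i : Fin (m + 1)) : Fin.partialSum y i ∈ Set.Icc (0 : 𝕜) 1 := by
  have hmono := Fin.monotone_partialSum hy.1
  constructor
  · simpa using hmono (Fin.zero_le i)
  · simpa [Fin.partialSum_last, hy.2] using hmono (Fin.le_last i)

namespace stdSimplex

open Set

variable {n : ℕ}

def padZeroOne (f : Fin n → Icc (0 : ℝ) 1) : Fin (n + 2) → ℝ :=
  Fin.cons 0 (Fin.snoc (fun j => (f j : ℝ)) 1)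

theorem monotone_padZeroOne {f : Fin n → Icc (0 : ℝ) 1} (hf : Monotone f) :
    Monotone (padZeroOne f) := by
  refine Fin.monotone_cons (Fin.monotone_snoc hf fun i => (f i).2.2) fun i => ?_
  cases i using Fin.lastCases with
  | last => simp
  | cast i => simpa using (f i).2.1

def partialSums (y : stdSimplex ℝ (Fin (n + 1))) : Fin n → Icc (0 : ℝ) 1 :=
  fun k => ⟨Fin.partialSum y.1 k.castSucc.succ, partialSum_mem_Icc y.2 _⟩

theorem padZeroOne_partialSums (y : stdSimplex ℝ (Fin (n + 1))) :
    padZeroOne (partialSums y) = Fin.partialSum y.1 := by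
  funext i
  cases i using Fin.cases with
  | zero => simp [padZeroOne]
  | succ i =>
    cases i using Fin.lastCases with
    | last => simp [padZeroOne, Fin.partialSum_last, y.2.2]
    | cast k => simp [padZeroOne, partialSums]

theorem monotone_partialSums (y : stdSimplex ℝ (Fin (n + 1))) : Monotone (partialSums y) :=
  fun _ _ h => Subtype.mk_le_mk.2 <|
    Fin.monotone_partialSum y.2.1 (Fin.succ_le_succ_iff.2 (Fin.castSucc_le_castSucc_iff.2 h))

theorem partialSums_injective : Function.Injective (partialSums (n := n)) := by
  intro y y' h
  have hsum := congrArg padZeroOne h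
  rw [padZeroOne_partialSums, padZeroOne_partialSums] at hsum
  refine Subtype.ext (funext fun i => ?_)
  rw [← Fin.partialSum_sub_castSucc y.1, ← Fin.partialSum_sub_castSucc y'.1, hsum]

theorem continuous_partialSums : Continuous (partialSums (n := n)) :=
  continuous_pi fun _ =>
    ((continuous_apply _).comp (Fin.continuous_partialSum.comp continuous_subtype_val)).subtype_mk _

def ofMonotone (f : Fin n → Icc (0 : ℝ) 1) (hf : Monotone f) : stdSimplex ℝ (Fin (n + 1)) :=
  ⟨fun i => padZeroOne f i.succ - padZeroOne f i.castSucc,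
    fun i => sub_nonneg.2 (monotone_padZeroOne hf i.castSucc_le_succ), by
      rw [← Fin.partialSum_last, Fin.partialSum_succ_sub_castSucc]
      simp [padZeroOne]⟩

theorem partialSum_ofMonotone (f : Fin n → Icc (0 : ℝ) 1) (hf : Monotone f) :
    Fin.partialSum (ofMonotone f hf).1 = padZeroOne f := by
  rw [ofMonotone, Fin.partialSum_succ_sub_castSucc]
  simp [padZeroOne]

theorem partialSums_ofMonotone (f : Fin n → Icc (0 : ℝ) 1) (hf : Monotone f) :
    partialSums (ofMonotone f hf) = f := by
  funext k
  apply Subtype.ext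
  simp [partialSums, partialSum_ofMonotone, padZeroOne]

theorem bijective_mk_partialSums :
    Function.Bijective fun y : stdSimplex ℝ (Fin (n + 1)) =>
      Quotient.mk (SPSetoid n (Icc (0 : ℝ) 1)) (partialSums y) := by
  constructor
  · intro y y' h
    exact partialSums_injective <|
      SPSetoid.eq_of_mk_eq_of_monotone (monotone_partialSums y) (monotone_partialSums y') h
  · intro q
    obtain ⟨f, hf, rfl⟩ := SPSetoid.exists_monotone_mk_eq q
    exact ⟨ofMonotone f hf, congrArg _ (partialSums_ofMonotone f hf)⟩

end stdSimplex

theorem SP_Icc_homeomorph_stdSimplex_general (n : ℕ) :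
    ∃ h : SP n (Set.Icc (0 : ℝ) 1) ≃ₜ stdSimplex ℝ (Fin (n + 1)),
      ∀ f : Fin n → Set.Icc (0 : ℝ) 1, (Monotone fun i => (f i : ℝ)) →
        (h (Quotient.mk (SPSetoid n (Set.Icc (0 : ℝ) 1)) f) : Fin (n + 1) → ℝ) =
          fun i : Fin (n + 1) =>
            (Fin.cons 0 (Fin.snoc (fun j => (f j : ℝ)) 1) : Fin (n + 2) → ℝ) i.succ -
            (Fin.cons 0 (Fin.snoc (fun j => (f j : ℝ)) 1) : Fin (n + 2) → ℝ) i.castSucc := by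
  let e : stdSimplex ℝ (Fin (n + 1)) ≃ SP n (Set.Icc (0 : ℝ) 1) :=
    Equiv.ofBijective _ stdSimplex.bijective_mk_partialSums
  have he : Continuous e := continuous_quot_mk.comp stdSimplex.continuous_partialSums
  let h := he.homeoOfEquivCompactToT2
  refine ⟨h.symm, fun f hf => ?_⟩
  have hf_simplex : h (stdSimplex.ofMonotone f hf) = Quotient.mk _ f :=
    congrArg _ (stdSimplex.partialSums_ofMonotone f hf)
  rw [h.symm_apply_eq.2 hf_simplex.symm]
  rfl

/-- `SP^n([0,1])` is homeomorphic to the standard `n`-simplex, via the map sending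
the sorted representative `0 ≤ x₁ ≤ … ≤ xₙ ≤ 1` of an orbit to the vector of
consecutive differences `(x₁, x₂ − x₁, …, xₙ − x_{n−1}, 1 − xₙ)`. -/
theorem SP_Icc_homeomorph_stdSimplex (n : ℕ) (hn : 1 ≤ n) :
    ∃ h : SP n (Set.Icc (0 : ℝ) 1) ≃ₜ stdSimplex ℝ (Fin (n + 1)),
      ∀ f : Fin n → Set.Icc (0 : ℝ) 1, (Monotone fun i => (f i : ℝ)) →
        (h (Quotient.mk (SPSetoid n (Set.Icc (0 : ℝ) 1)) f) : Fin (n + 1) → ℝ) =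
          fun i : Fin (n + 1) =>
            (Fin.cons 0 (Fin.snoc (fun j => (f j : ℝ)) 1) : Fin (n + 2) → ℝ) i.succ -
            (Fin.cons 0 (Fin.snoc (fun j => (f j : ℝ)) 1) : Fin (n + 2) → ℝ) i.castSucc :=
  SP_Icc_homeomorph_stdSimplex_general n
end

section
/- The second symmetric product SP²(S¹) of the circle (the unit circle Circle = { z ∈ ℂ | |z| = 1 }) is homeomorphic to the Möbius band, presented as the quotient of the square [0,1] × [0,1] by the identification (0, y) ∼ (1, 1 − y) for all y ∈ [0,1], with the quotient topology. -/
/-- The gluing relation on the square `[0,1] × [0,1]` identifying `(0, y)` with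
`(1, 1 − y)`. -/
def MobiusRel (p q : Set.Icc (0 : ℝ) 1 × Set.Icc (0 : ℝ) 1) : Prop :=
  (p.1 : ℝ) = 0 ∧ (q.1 : ℝ) = 1 ∧ (q.2 : ℝ) = 1 - (p.2 : ℝ)

/-- The Möbius band: the quotient of the square `[0,1] × [0,1]` by the smallest
equivalence relation identifying `(0, y)` with `(1, 1 − y)`, with the quotient
topology. -/
def MobiusBand : Type := Quot MobiusRel

instance : TopologicalSpace MobiusBand :=
  inferInstanceAs (TopologicalSpace (Quot MobiusRel))

/-! ### Auxiliary material for the proof -/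

open Real Set

namespace SPMobius

/-- The parametrizing map from the square to the torus:
`(x, y) ↦ (exp(π(x+y)), exp(π(x−y)))`. -/
noncomputable def sqF (p : Set.Icc (0:ℝ) 1 × Set.Icc (0:ℝ) 1) : Fin 2 → Circle :=
  fun i => Circle.exp (π * ((p.1 : ℝ) + (if i = 0 then 1 else -1) * (p.2 : ℝ)))

lemma sqF_zero (p : Set.Icc (0:ℝ) 1 × Set.Icc (0:ℝ) 1) :
    sqF p 0 = Circle.exp (π * ((p.1 : ℝ) + (p.2 : ℝ))) := by
  simp [sqF]

lemma sqF_one (p : Set.Icc (0:ℝ) 1 × Set.Icc (0:ℝ) 1) :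
    sqF p 1 = Circle.exp (π * ((p.1 : ℝ) - (p.2 : ℝ))) := by
  simp only [sqF]
  norm_num
  ring_nf

lemma sqF_cont : Continuous sqF := by
  apply continuous_pi
  intro i
  exact Circle.exp.continuous.comp (by fun_prop)

lemma perm2 (σ : Equiv.Perm (Fin 2)) : (σ 0 = 0 ∧ σ 1 = 1) ∨ (σ 0 = 1 ∧ σ 1 = 0) := by
  revert σ; decide

lemma fin2 (i : Fin 2) : i = 0 ∨ i = 1 := by omega

lemma exp_eq_lin {a b : ℝ} (h : Circle.exp (π * a) = Circle.exp (π * b)) :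
    ∃ m : ℤ, a = b + 2 * m := by
  obtain ⟨m, hm⟩ := Circle.exp_eq_exp.mp h
  refine ⟨m, ?_⟩
  apply mul_left_cancel₀ Real.pi_ne_zero
  linear_combination hm

/-- Trichotomy: equal, or identified one way, or identified the other way. -/
def Tri (x y x' y' : ℝ) : Prop :=
  (x = x' ∧ y = y') ∨ (x = 0 ∧ x' = 1 ∧ y' = 1 - y) ∨ (x' = 0 ∧ x = 1 ∧ y = 1 - y')

lemma keyA {x y x' y' : ℝ} (hx0 : 0 ≤ x) (hx1 : x ≤ 1) (hy0 : 0 ≤ y) (hy1 : y ≤ 1)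
    (hx0' : 0 ≤ x') (hx1' : x' ≤ 1) (hy0' : 0 ≤ y') (hy1' : y' ≤ 1) (m n : ℤ)
    (h1 : x + y = x' + y' + 2*m) (h2 : x - y = x' - y' + 2*n) :
    Tri x y x' y' := by
  have e1 : x = x' + ((m + n : ℤ) : ℝ) := by push_cast; linarith
  have e2 : y = y' + ((m - n : ℤ) : ℝ) := by push_cast; linarith
  have b1l : (-1 : ℤ) ≤ m + n := by
    have : (-1:ℝ) ≤ ((m+n:ℤ):ℝ) := by linarith
    exact_mod_cast this
  have b1r : m + n ≤ (1 : ℤ) := by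
    have : ((m+n:ℤ):ℝ) ≤ 1 := by linarith
    exact_mod_cast this
  have b2l : (-1 : ℤ) ≤ m - n := by
    have : (-1:ℝ) ≤ ((m-n:ℤ):ℝ) := by linarith
    exact_mod_cast this
  have b2r : m - n ≤ (1 : ℤ) := by
    have : ((m-n:ℤ):ℝ) ≤ 1 := by linarith
    exact_mod_cast this
  have hcase : (m + n = 0 ∧ m - n = 0) ∨ (m + n = 1 ∧ m - n = 1) ∨
      (m + n = 1 ∧ m - n = -1) ∨ (m + n = -1 ∧ m - n = 1) ∨
      (m + n = -1 ∧ m - n = -1) := by omega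
  rcases hcase with ⟨ha, hb⟩ | ⟨ha, hb⟩ | ⟨ha, hb⟩ | ⟨ha, hb⟩ | ⟨ha, hb⟩ <;>
    rw [ha] at e1 <;> rw [hb] at e2 <;> push_cast at e1 e2
  · exact Or.inl ⟨by linarith, by linarith⟩
  · exact Or.inr (Or.inr ⟨by linarith, by linarith, by linarith⟩)
  · exact Or.inr (Or.inr ⟨by linarith, by linarith, by linarith⟩)
  · exact Or.inr (Or.inl ⟨by linarith, by linarith, by linarith⟩)
  · exact Or.inr (Or.inl ⟨by linarith, by linarith, by linarith⟩)

lemma keyB {x y x' y' : ℝ} (hx0 : 0 ≤ x) (hx1 : x ≤ 1) (hy0 : 0 ≤ y) (hy1 : y ≤ 1)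
    (hx0' : 0 ≤ x') (hx1' : x' ≤ 1) (hy0' : 0 ≤ y') (hy1' : y' ≤ 1) (m n : ℤ)
    (h1 : x + y = x' - y' + 2*m) (h2 : x - y = x' + y' + 2*n) :
    Tri x y x' y' := by
  have e1 : x = x' + ((m + n : ℤ) : ℝ) := by push_cast; linarith
  have e2 : y = -y' + ((m - n : ℤ) : ℝ) := by push_cast; linarith
  have b1l : (-1 : ℤ) ≤ m + n := by
    have : (-1:ℝ) ≤ ((m+n:ℤ):ℝ) := by linarith
    exact_mod_cast this
  have b1r : m + n ≤ (1 : ℤ) := by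
    have : ((m+n:ℤ):ℝ) ≤ 1 := by linarith
    exact_mod_cast this
  have b2l : (0 : ℤ) ≤ m - n := by
    have : (0:ℝ) ≤ ((m-n:ℤ):ℝ) := by linarith
    exact_mod_cast this
  have b2r : m - n ≤ (2 : ℤ) := by
    have : ((m-n:ℤ):ℝ) ≤ 2 := by linarith
    exact_mod_cast this
  have hcase : (m + n = 0 ∧ m - n = 0) ∨ (m + n = 0 ∧ m - n = 2) ∨
      (m + n = 1 ∧ m - n = 1) ∨ (m + n = -1 ∧ m - n = 1) := by omega
  rcases hcase with ⟨ha, hb⟩ | ⟨ha, hb⟩ | ⟨ha, hb⟩ | ⟨ha, hb⟩ <;>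
    rw [ha] at e1 <;> rw [hb] at e2 <;> push_cast at e1 e2
  · exact Or.inl ⟨by linarith, by linarith⟩
  · exact Or.inl ⟨by linarith, by linarith⟩
  · exact Or.inr (Or.inr ⟨by linarith, by linarith, by linarith⟩)
  · exact Or.inr (Or.inl ⟨by linarith, by linarith, by linarith⟩)

/-- From the trichotomy conclude equality in the Möbius band. -/
lemma tri_quot_eq (p q : Set.Icc (0:ℝ) 1 × Set.Icc (0:ℝ) 1)
    (h : Tri (p.1 : ℝ) (p.2 : ℝ) (q.1 : ℝ) (q.2 : ℝ)) :
    Quot.mk MobiusRel p = Quot.mk MobiusRel q := by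
  rcases h with ⟨h1, h2⟩ | ⟨h1, h2, h3⟩ | ⟨h1, h2, h3⟩
  · congr 1
    exact Prod.ext (Subtype.ext h1) (Subtype.ext h2)
  · exact Quot.sound ⟨h1, h2, h3⟩
  · have hr : MobiusRel q p := ⟨h1, h2, h3⟩
    exact (Quot.sound hr).symm

lemma sqF_inj (p q : Set.Icc (0:ℝ) 1 × Set.Icc (0:ℝ) 1) (σ : Equiv.Perm (Fin 2))
    (hσ : sqF p ∘ σ = sqF q) :
    Quot.mk MobiusRel p = Quot.mk MobiusRel q := by
  apply tri_quot_eq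
  have h0 : sqF p (σ 0) = sqF q 0 := congrFun hσ 0
  have h1 : sqF p (σ 1) = sqF q 1 := congrFun hσ 1
  obtain ⟨hxp0, hxp1⟩ := p.1.2
  obtain ⟨hyp0, hyp1⟩ := p.2.2
  obtain ⟨hxq0, hxq1⟩ := q.1.2
  obtain ⟨hyq0, hyq1⟩ := q.2.2
  rcases perm2 σ with ⟨e0, e1⟩ | ⟨e0, e1⟩ <;> rw [e0] at h0 <;> rw [e1] at h1
  · rw [sqF_zero, sqF_zero] at h0
    rw [sqF_one, sqF_one] at h1
    obtain ⟨m, hm⟩ := exp_eq_lin h0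
    obtain ⟨n, hn⟩ := exp_eq_lin h1
    exact keyA hxp0 hxp1 hyp0 hyp1 hxq0 hxq1 hyq0 hyq1 m n hm hn
  · rw [sqF_one, sqF_zero] at h0
    rw [sqF_zero, sqF_one] at h1
    obtain ⟨n, hn⟩ := exp_eq_lin h0
    obtain ⟨m, hm⟩ := exp_eq_lin h1
    exact keyB hxp0 hxp1 hyp0 hyp1 hxq0 hxq1 hyq0 hyq1 m n hm hn

/-- Components equal up to a swap give the same point in `SP 2 Circle`. -/
lemma sp_eq_of_components {f g : Fin 2 → Circle}
    (h : (f 0 = g 0 ∧ f 1 = g 1) ∨ (f 0 = g 1 ∧ f 1 = g 0)) :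
    (Quotient.mk (SPSetoid 2 Circle) f : SP 2 Circle) = Quotient.mk (SPSetoid 2 Circle) g := by
  apply Quotient.sound
  rcases h with ⟨h0, h1⟩ | ⟨h0, h1⟩
  · refine ⟨Equiv.refl _, funext fun i => ?_⟩
    rcases fin2 i with rfl | rfl <;> simpa
  · refine ⟨Equiv.swap 0 1, funext fun i => ?_⟩
    rcases fin2 i with rfl | rfl <;>
      simp [Function.comp, Equiv.swap_apply_left, Equiv.swap_apply_right, h0, h1]

/-- The map from the Möbius band to `SP 2 Circle`. -/
noncomputable def mobToSP : MobiusBand → SP 2 Circle :=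
  Quot.lift (fun p => (Quotient.mk (SPSetoid 2 Circle) (sqF p) : SP 2 Circle)) (by
    rintro p q ⟨h1, h2, h3⟩
    apply sp_eq_of_components
    right
    constructor
    · rw [sqF_zero, sqF_one, h1, h2, h3]
      congr 1
      ring
    · rw [sqF_one, sqF_zero, h1, h2, h3]
      symm
      apply Circle.exp_eq_exp.mpr
      exact ⟨1, by push_cast; ring⟩)

lemma mobToSP_cont : Continuous mobToSP := by
  apply continuous_quot_lift
  exact continuous_quot_mk.comp sqF_cont

lemma mobToSP_inj : Function.Injective mobToSP := by
  intro a b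
  refine Quot.inductionOn a fun p => Quot.inductionOn b fun q h => ?_
  have h' : (Quotient.mk (SPSetoid 2 Circle) (sqF p) : SP 2 Circle)
      = Quotient.mk (SPSetoid 2 Circle) (sqF q) := h
  obtain ⟨σ, hσ⟩ := Quotient.exact h'
  exact sqF_inj p q σ hσ

lemma surj_aux {α β : ℝ} (hα1 : -π < α) (hα2 : α ≤ π) (hβ1 : -π < β) (hβ2 : β ≤ π)
    (hle : β ≤ α) :
    ∃ p : Set.Icc (0:ℝ) 1 × Set.Icc (0:ℝ) 1,
      (sqF p 0 = Circle.exp α ∧ sqF p 1 = Circle.exp β) ∨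
      (sqF p 0 = Circle.exp β ∧ sqF p 1 = Circle.exp α) := by
  have hπ : (0:ℝ) < π := Real.pi_pos
  have h2π : (0:ℝ) < 2 * π := by linarith
  rcases le_or_gt 0 (α + β) with h | h
  · refine ⟨⟨⟨(α+β)/(2*π), ?_, ?_⟩, ⟨(α-β)/(2*π), ?_, ?_⟩⟩, Or.inl ⟨?_, ?_⟩⟩
    · exact div_nonneg h (le_of_lt h2π)
    · rw [div_le_one h2π]; linarith
    · exact div_nonneg (by linarith) (le_of_lt h2π)
    · rw [div_le_one h2π]; linarith
    · rw [sqF_zero]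
      congr 1
      field_simp
      ring
    · rw [sqF_one]
      congr 1
      field_simp
      ring
  · refine ⟨⟨⟨(α+β)/(2*π) + 1, ?_, ?_⟩, ⟨(β-α)/(2*π) + 1, ?_, ?_⟩⟩, Or.inr ⟨?_, ?_⟩⟩
    · have : -1 ≤ (α+β)/(2*π) := by
        rw [neg_le, ← neg_div, div_le_one h2π]; linarith
      linarith
    · have : (α+β)/(2*π) ≤ 0 := div_nonpos_of_nonpos_of_nonneg (le_of_lt h) (le_of_lt h2π)
      linarith
    · have : -1 ≤ (β-α)/(2*π) := by
        rw [neg_le, ← neg_div, div_le_one h2π]; linarith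
      linarith
    · have : (β-α)/(2*π) ≤ 0 := div_nonpos_of_nonpos_of_nonneg (by linarith) (le_of_lt h2π)
      linarith
    · rw [sqF_zero]
      apply Circle.exp_eq_exp.mpr
      refine ⟨1, ?_⟩
      push_cast
      field_simp
      ring
    · rw [sqF_one]
      congr 1
      field_simp
      ring

lemma mobToSP_surj : Function.Surjective mobToSP := by
  intro q
  refine Quotient.inductionOn q fun f => ?_
  rcases le_total (Complex.arg (f 1 : ℂ)) (Complex.arg (f 0 : ℂ)) with hle | hle
  · obtain ⟨p, hp⟩ := surj_aux (Complex.neg_pi_lt_arg _) (Complex.arg_le_pi _)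
      (Complex.neg_pi_lt_arg _) (Complex.arg_le_pi _) hle
    refine ⟨Quot.mk MobiusRel p, ?_⟩
    show (Quotient.mk (SPSetoid 2 Circle) (sqF p) : SP 2 Circle) = Quotient.mk _ f
    apply sp_eq_of_components
    rcases hp with ⟨h0, h1⟩ | ⟨h0, h1⟩
    · exact Or.inl ⟨by rw [h0, Circle.exp_arg], by rw [h1, Circle.exp_arg]⟩
    · exact Or.inr ⟨by rw [h0, Circle.exp_arg], by rw [h1, Circle.exp_arg]⟩
  · obtain ⟨p, hp⟩ := surj_aux (Complex.neg_pi_lt_arg ((f 1 : ℂ))) (Complex.arg_le_pi _)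
      (Complex.neg_pi_lt_arg ((f 0 : ℂ))) (Complex.arg_le_pi _) hle
    refine ⟨Quot.mk MobiusRel p, ?_⟩
    show (Quotient.mk (SPSetoid 2 Circle) (sqF p) : SP 2 Circle) = Quotient.mk _ f
    apply sp_eq_of_components
    rcases hp with ⟨h0, h1⟩ | ⟨h0, h1⟩
    · exact Or.inr ⟨by rw [h0, Circle.exp_arg], by rw [h1, Circle.exp_arg]⟩
    · exact Or.inl ⟨by rw [h0, Circle.exp_arg], by rw [h1, Circle.exp_arg]⟩

/-- The elementary symmetric functions, as a map `SP 2 Circle → ℂ × ℂ`. -/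
noncomputable def spSym : SP 2 Circle → ℂ × ℂ :=
  Quotient.lift (fun f : Fin 2 → Circle => (((f 0 : ℂ) + (f 1 : ℂ)), ((f 0 : ℂ) * (f 1 : ℂ)))) (by
    rintro f g ⟨σ, rfl⟩
    rcases perm2 σ with ⟨e0, e1⟩ | ⟨e0, e1⟩ <;>
      simp only [Function.comp_apply, e0, e1] <;> exact Prod.ext (by ring) (by ring))

lemma spSym_cont : Continuous spSym := by
  apply continuous_quot_lift
  fun_prop

lemma spSym_inj : Function.Injective spSym := by
  intro a b
  refine Quotient.inductionOn₂ a b fun f g h => ?_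
  have hs : (f 0 : ℂ) + (f 1 : ℂ) = (g 0 : ℂ) + (g 1 : ℂ) := congrArg Prod.fst h
  have hp : (f 0 : ℂ) * (f 1 : ℂ) = (g 0 : ℂ) * (g 1 : ℂ) := congrArg Prod.snd h
  have hz : ((g 0 : ℂ) - (f 0 : ℂ)) * ((g 0 : ℂ) - (f 1 : ℂ)) = 0 := by
    linear_combination (-(g 0 : ℂ)) * hs + hp
  rcases mul_eq_zero.mp hz with h0 | h0
  · have e0 : (g 0 : ℂ) = (f 0 : ℂ) := sub_eq_zero.mp h0
    have e1 : (g 1 : ℂ) = (f 1 : ℂ) := by linear_combination -hs - e0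
    exact sp_eq_of_components
      (Or.inl ⟨Circle.coe_injective e0.symm, Circle.coe_injective e1.symm⟩)
  · have e0 : (g 0 : ℂ) = (f 1 : ℂ) := sub_eq_zero.mp h0
    have e1 : (g 1 : ℂ) = (f 0 : ℂ) := by linear_combination -hs - e0
    exact sp_eq_of_components
      (Or.inr ⟨Circle.coe_injective e1.symm, Circle.coe_injective e0.symm⟩)



instance : T2Space (SP 2 Circle) :=
  T2Space.of_injective_continuous spSym_inj spSym_cont


end SPMobius

instance : CompactSpace MobiusBand :=
  inferInstanceAs (CompactSpace (Quot MobiusRel))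

/-- `SP²(S¹)` is homeomorphic to the Möbius band. -/
theorem SP_two_circle_homeomorph_mobiusBand :
    Nonempty (SP 2 Circle ≃ₜ MobiusBand) := by
  let e : MobiusBand ≃ SP 2 Circle :=
    Equiv.ofBijective SPMobius.mobToSP ⟨SPMobius.mobToSP_inj, SPMobius.mobToSP_surj⟩
  have hcont : Continuous e := SPMobius.mobToSP_cont
  exact ⟨(hcont.homeoOfEquivCompactToT2 (f := e)).symm⟩
end

section
/- For every n ≥ 1, the n-th symmetric product of the Riemann sphere is homeomorphic to complex projective n-space: SP^n(ℙ¹(ℂ)) ≃ ℙ^n(ℂ), i.e. there is a homeomorphism between the quotient of (Projectivization ℂ (Fin 2 → ℂ))^n by the permutation action of S_n and Projectivization ℂ (Fin (n+1) → ℂ). (The homeomorphism sends an unordered n-tuple of points of ℙ¹(ℂ), viewed as roots, to the projective class of coefficients of the degree-n binary form vanishing at those points.) -/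
open Projectivization in
/-- The quotient topology on a projectivization, coming from the topology on
`{v : V // v ≠ 0}`. -/
instance (K V : Type*) [DivisionRing K] [AddCommGroup V] [Module K V]
    [TopologicalSpace V] : TopologicalSpace (Projectivization K V) :=
  inferInstanceAs (TopologicalSpace (Quotient (projectivizationSetoid K V)))

/-!
Read a point `[a : b]` of `ℙ¹` as the root of the linear form `b X - a` (with `[1 : 0] = ∞`).
An unordered `n`-tuple of points goes to the coefficient vector of the product of its linear
forms, a nonzero polynomial of degree at most `n`, well defined up to a scalar. This map is
continuous and is a bijection `SP^n(ℙ¹) → ℙⁿ`: it is injective because the tuple is recovered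
as the multiset of roots of the polynomial, completed by `n - deg` roots at `∞`, and surjective
because every polynomial splits over `ℂ`. Since `SP^n(ℙ¹)` is compact and `ℙⁿ` is Hausdorff,
it is a homeomorphism.
-/

open Polynomial Projectivization Topology
open scoped LinearAlgebra.Projectivization OnePoint

theorem exists_perm_comp_eq_of_map_univ_eq {ι α : Type*} [Fintype ι] [DecidableEq α]
    {f g : ι → α} (h : Finset.univ.val.map f = Finset.univ.val.map g) :
    ∃ σ : Equiv.Perm ι, f ∘ σ = g := by
  have hfiber : ∀ a, Fintype.card {i // g i = a} = Fintype.card {i // f i = a} := by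
    intro a
    have := congrArg (Multiset.count a) h
    simp only [Multiset.count_map] at this
    simp only [Fintype.card_subtype, Finset.card_def, Finset.filter_val, eq_comm (b := a)]
    exact this.symm
  exact ⟨Equiv.ofFiberEquiv fun a => Fintype.equivOfCardEq (hfiber a),
    funext (Equiv.ofFiberEquiv_map _)⟩

theorem Polynomial.continuous_coeff_prod {X ι R : Type*} [TopologicalSpace X] [CommSemiring R]
    [TopologicalSpace R] [IsTopologicalSemiring R] (s : Finset ι) {p : ι → X → R[X]}
    (hp : ∀ i ∈ s, ∀ k, Continuous fun x => (p i x).coeff k) (k : ℕ) :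
    Continuous fun x => (∏ i ∈ s, p i x).coeff k := by
  classical
  induction s using Finset.induction_on generalizing k with
  | empty => simpa using continuous_const
  | insert i s hi ih =>
    simp only [Finset.prod_insert hi, coeff_mul]
    exact continuous_finsetSum _ fun m _ =>
      (hp i (s.mem_insert_self i) _).mul (ih (fun j hj => hp j (s.mem_insert_of_mem hj)) _)

namespace Projectivization

theorem isOpenQuotientMap_mk (K V : Type*) [DivisionRing K] [AddCommGroup V] [Module K V]
    [TopologicalSpace V] [ContinuousConstSMul K V] :
    IsOpenQuotientMap fun v : {v : V // v ≠ 0} => mk K v.1 v.2 := by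
  set π : {v : V // v ≠ 0} → ℙ K V := fun v => mk K v.1 v.2
  have hquot : IsQuotientMap π := isQuotientMap_quot_mk
  refine ⟨hquot.surjective, hquot.continuous, fun U hU => hquot.isOpen_preimage.1 ?_⟩
  have hsat : π ⁻¹' (π '' U) = ⋃ a : Kˣ,
      (fun w : {v : V // v ≠ 0} => (⟨a • w.1, smul_ne_zero a.ne_zero w.2⟩ : {v : V // v ≠ 0}))
        ⁻¹' U := by
    ext w
    simp only [π, Set.mem_preimage, Set.mem_image, Set.mem_iUnion, mk_eq_mk_iff]
    constructor
    · rintro ⟨u, hu, a, ha⟩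
      exact ⟨a, by convert hu⟩
    · rintro ⟨a, ha⟩
      exact ⟨_, ha, a, rfl⟩
  rw [hsat]
  exact isOpen_iUnion fun a => hU.preimage
    (((continuous_const_smul (a : K)).comp continuous_subtype_val).subtype_mk _)

theorem mk_eq_mk_iff_mul_eq_mul {K ι : Type*} [Field K] {v w : ι → K} (hv : v ≠ 0)
    (hw : w ≠ 0) : mk K v hv = mk K w hw ↔ ∀ i j, v i * w j = v j * w i := by
  rw [mk_eq_mk_iff']
  constructor
  · rintro ⟨a, rfl⟩ i j
    simp only [Pi.smul_apply, smul_eq_mul]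
    ring
  · intro h
    obtain ⟨j, hj⟩ := Function.ne_iff.1 hw
    refine ⟨v j / w j, funext fun i => ?_⟩
    simp only [Pi.smul_apply, smul_eq_mul]
    rw [div_mul_eq_mul_div, ← h, mul_div_cancel_right₀ _ hj]

instance {K ι : Type*} [Field K] [TopologicalSpace K] [ContinuousMul K] [T2Space K] :
    T2Space (ℙ K (ι → K)) := by
  rw [t2Space_iff_of_isOpenQuotientMap (isOpenQuotientMap_mk K (ι → K))]
  simp only [mk_eq_mk_iff_mul_eq_mul, Set.ofPred_forall]
  have hcoord : ∀ i, Continuous fun v : {v : ι → K // v ≠ 0} => (v : ι → K) i := fun i =>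
    (continuous_apply i).comp continuous_subtype_val
  exact isClosed_iInter fun i => isClosed_iInter fun j => isClosed_eq
    (((hcoord i).comp continuous_fst).mul ((hcoord j).comp continuous_snd))
    (((hcoord j).comp continuous_fst).mul ((hcoord i).comp continuous_snd))

instance {𝕜 V : Type*} [RCLike 𝕜] [NormedAddCommGroup V] [NormedSpace 𝕜 V] [ProperSpace V] :
    CompactSpace (ℙ 𝕜 V) := by
  have : CompactSpace (Metric.sphere (0 : V) 1) :=
    isCompact_iff_compactSpace.1 (isCompact_sphere _ _)
  let π : Metric.sphere (0 : V) 1 → ℙ 𝕜 V := fun v => mk 𝕜 v.1 (ne_zero_of_mem_unit_sphere v)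
  have hsurj : Function.Surjective π := by
    intro x
    induction x using Projectivization.ind with
    | h v hv =>
      refine ⟨⟨((‖v‖⁻¹ : ℝ) : 𝕜) • v, ?_⟩, (mk_eq_mk_iff' _ _ _ _ _).2 ⟨_, rfl⟩⟩
      rw [mem_sphere_zero_iff_norm, norm_smul, RCLike.norm_ofReal, abs_inv, abs_norm,
        inv_mul_cancel₀ (norm_ne_zero_iff.2 hv)]
  have hπ : Continuous π := continuous_quot_mk.comp (continuous_subtype_val.subtype_mk _)
  exact ⟨by simpa only [hsurj.range_eq] using isCompact_range hπ⟩

end Projectivization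

instance {n : ℕ} {X : Type*} [TopologicalSpace X] [CompactSpace X] : CompactSpace (SP n X) :=
  inferInstanceAs (CompactSpace (Quotient (SPSetoid n X)))

noncomputable def SP.homeomorphOfPermFibers {n : ℕ} {X Y : Type*} [TopologicalSpace X]
    [CompactSpace X] [TopologicalSpace Y] [T2Space Y] (φ : (Fin n → X) → Y) (hφ : Continuous φ)
    (hsurj : Function.Surjective φ)
    (hfib : ∀ x y, φ x = φ y ↔ ∃ σ : Equiv.Perm (Fin n), x ∘ σ = y) :
    SP n X ≃ₜ Y :=
  have hinj : Function.Injective (Quotient.lift φ fun x y h => (hfib x y).2 h : SP n X → Y) :=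
    fun a b => Quotient.inductionOn₂ a b fun x y h => Quotient.sound ((hfib x y).1 h)
  (hφ.quotient_lift _).homeoOfEquivCompactToT2
    (f := .ofBijective _ ⟨hinj, fun y => (hsurj y).elim fun x hx => ⟨⟦x⟧, hx⟩⟩)

namespace Polynomial

variable {K : Type*} [Field K]

theorem toFn_eq_toFn_iff {n : ℕ} {P Q : K[X]} (hP : P.natDegree ≤ n) (hQ : Q.natDegree ≤ n) :
    toFn (n + 1) P = toFn (n + 1) Q ↔ P = Q := by
  classical
  refine ⟨fun h => ?_, congrArg _⟩
  rw [← ofFn_comp_toFn_eq_id_of_natDegree_lt (Nat.lt_succ_of_le hP), h,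
    ofFn_comp_toFn_eq_id_of_natDegree_lt (Nat.lt_succ_of_le hQ)]

theorem toFn_ne_zero {n : ℕ} {P : K[X]} (hP : P ≠ 0) (hdeg : P.natDegree ≤ n) :
    toFn (n + 1) P ≠ 0 := by
  rw [← (toFn (n + 1)).map_zero, Ne, toFn_eq_toFn_iff hdeg (by simp)]
  exact hP

end Polynomial

theorem Projectivization.mk_toFn_eq_mk_toFn_iff {K : Type*} [Field K] {n : ℕ} {P Q : K[X]}
    (hP : P ≠ 0) (hQ : Q ≠ 0) (hdP : P.natDegree ≤ n) (hdQ : Q.natDegree ≤ n) :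
    mk K (toFn (n + 1) P) (toFn_ne_zero hP hdP) = mk K (toFn (n + 1) Q) (toFn_ne_zero hQ hdQ) ↔
      ∃ a : Kˣ, C (a : K) * Q = P := by
  rw [mk_eq_mk_iff]
  refine exists_congr fun a => ?_
  rw [Units.smul_def, ← map_smul, smul_eq_C_mul,
    toFn_eq_toFn_iff ((natDegree_C_mul_le _ _).trans hdQ) hdP]

section BinaryForms

variable {K : Type*} [Field K]

noncomputable def linearFactor (v : Fin 2 → K) : K[X] := C (v 1) * X - C (v 0)

theorem linearFactor_ne_zero {v : Fin 2 → K} (hv : v ≠ 0) : linearFactor v ≠ 0 := by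
  intro h
  have h1 := congrArg (coeff · 1) h
  have h0 := congrArg (coeff · 0) h
  simp only [linearFactor, coeff_sub, coeff_C_mul_X, coeff_C, coeff_zero] at h0 h1
  exact hv (funext fun i => by fin_cases i <;> simp_all)

theorem linearFactor_smul (a : K) (v : Fin 2 → K) :
    linearFactor (a • v) = C a * linearFactor v := by
  simp only [linearFactor, Pi.smul_apply, smul_eq_mul, map_mul]
  ring

theorem natDegree_linearFactor_le (v : Fin 2 → K) : (linearFactor v).natDegree ≤ 1 := by
  rw [linearFactor, natDegree_sub_C]
  exact (natDegree_C_mul_le _ _).trans natDegree_X_le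

theorem prod_linearFactor_ne_zero {ι : Type*} [Fintype ι] {f : ι → Fin 2 → K}
    (hf : ∀ i, f i ≠ 0) : ∏ i, linearFactor (f i) ≠ 0 :=
  Finset.prod_ne_zero_iff.2 fun i _ => linearFactor_ne_zero (hf i)

theorem natDegree_prod_linearFactor_le {n : ℕ} (f : Fin n → Fin 2 → K) :
    (∏ i, linearFactor (f i)).natDegree ≤ n := by
  refine (natDegree_prod_le _ _).trans ?_
  calc ∑ i, (linearFactor (f i)).natDegree ≤ ∑ _i : Fin n, 1 :=
        Finset.sum_le_sum fun i _ => natDegree_linearFactor_le (f i)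
    _ = n := by simp

noncomputable def formOfRoots (n : ℕ) (x : Fin n → ℙ K (Fin 2 → K)) : ℙ K (Fin (n + 1) → K) :=
  mk K (toFn (n + 1) (∏ i, linearFactor (x i).rep))
    (toFn_ne_zero (prod_linearFactor_ne_zero fun i => rep_nonzero (x i))
      (natDegree_prod_linearFactor_le _))

theorem formOfRoots_mk {n : ℕ} (f : Fin n → Fin 2 → K) (hf : ∀ i, f i ≠ 0) :
    formOfRoots n (fun i => mk K (f i) (hf i)) =
      mk K (toFn (n + 1) (∏ i, linearFactor (f i)))
        (toFn_ne_zero (prod_linearFactor_ne_zero hf) (natDegree_prod_linearFactor_le _)) := by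
  rw [formOfRoots, mk_toFn_eq_mk_toFn_iff (prod_linearFactor_ne_zero fun i => rep_nonzero _)
    (prod_linearFactor_ne_zero hf) (natDegree_prod_linearFactor_le _)
    (natDegree_prod_linearFactor_le _)]
  choose a ha using fun i => exists_smul_eq_mk_rep K (f i) (hf i)
  refine ⟨∏ i, a i, ?_⟩
  simp only [← ha, Units.smul_def, linearFactor_smul, Finset.prod_mul_distrib, Units.coe_prod,
    map_prod]

theorem formOfRoots_comp_perm {n : ℕ} (x : Fin n → ℙ K (Fin 2 → K)) (σ : Equiv.Perm (Fin n)) :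
    formOfRoots n (x ∘ σ) = formOfRoots n x := by
  simp only [formOfRoots, Function.comp_apply, Equiv.prod_comp σ fun i => linearFactor (x i).rep]

/-- The roots in `K ∪ {∞}` of `P` read as a binary form of degree `n`: the degree deficit
`n - P.natDegree` counts the roots at infinity. -/
noncomputable def rootsWithInfty (n : ℕ) (P : K[X]) : Multiset (OnePoint K) :=
  P.roots.map ((↑) : K → OnePoint K) + Multiset.replicate (n - P.natDegree) ∞

theorem rootsWithInfty_C_mul (n : ℕ) (P : K[X]) {a : K} (ha : a ≠ 0) :
    rootsWithInfty n (C a * P) = rootsWithInfty n P := by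
  rw [rootsWithInfty, rootsWithInfty, roots_C_mul _ ha, natDegree_C_mul ha]

theorem rootsWithInfty_linearFactor_mul [DecidableEq K] {n : ℕ} {v : Fin 2 → K} (hv : v ≠ 0)
    {P : K[X]} (hP : P ≠ 0) (hdeg : P.natDegree ≤ n) :
    rootsWithInfty (n + 1) (linearFactor v * P) =
      (OnePoint.equivProjectivization K).symm (mk K v hv) ::ₘ rootsWithInfty n P := by
  rw [OnePoint.equivProjectivization_symm_apply_mk]
  by_cases h1 : v 1 = 0
  · have h0 : v 0 ≠ 0 := fun h0 => hv (funext fun i => by fin_cases i <;> assumption)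
    have hlin : linearFactor v = C (-v 0) := by simp [linearFactor, h1]
    rw [if_pos h1, hlin, rootsWithInfty_C_mul _ _ (neg_ne_zero.2 h0), rootsWithInfty,
      rootsWithInfty, Nat.sub_add_comm hdeg, Multiset.replicate_succ, Multiset.add_cons]
  · have hlin : linearFactor v = C (v 1) * X - C (v 0) := rfl
    rw [if_neg h1, rootsWithInfty, rootsWithInfty, roots_mul (mul_ne_zero
      (linearFactor_ne_zero hv) hP), natDegree_mul (linearFactor_ne_zero hv) hP, hlin,
      roots_C_mul_X_sub_C _ h1, natDegree_sub_C, natDegree_C_mul_X _ h1, Multiset.map_add,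
      Multiset.map_singleton, Multiset.singleton_add, Multiset.cons_add, add_comm 1,
      Nat.add_sub_add_right]

theorem rootsWithInfty_prod_linearFactor [DecidableEq K] {n : ℕ} (f : Fin n → Fin 2 → K)
    (hf : ∀ i, f i ≠ 0) :
    rootsWithInfty n (∏ i, linearFactor (f i)) =
      Finset.univ.val.map fun i => (OnePoint.equivProjectivization K).symm (mk K (f i) (hf i)) := by
  induction n with
  | zero => simp [rootsWithInfty]
  | succ n ih =>
    rw [Fin.prod_univ_succ, rootsWithInfty_linearFactor_mul (hf 0)
      (prod_linearFactor_ne_zero fun i => hf i.succ) (natDegree_prod_linearFactor_le _),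
      ih (fun i => f i.succ) fun i => hf i.succ]
    simp only [Fin.univ_val_map, List.ofFn_succ, Multiset.cons_coe]

theorem formOfRoots_eq_formOfRoots_iff {n : ℕ} {x y : Fin n → ℙ K (Fin 2 → K)} :
    formOfRoots n x = formOfRoots n y ↔ ∃ σ : Equiv.Perm (Fin n), x ∘ σ = y := by
  classical
  refine ⟨fun h => ?_, fun ⟨σ, hσ⟩ => hσ ▸ (formOfRoots_comp_perm x σ).symm⟩
  obtain ⟨a, ha⟩ := (mk_toFn_eq_mk_toFn_iff (prod_linearFactor_ne_zero fun i => rep_nonzero _)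
    (prod_linearFactor_ne_zero fun i => rep_nonzero _) (natDegree_prod_linearFactor_le _)
    (natDegree_prod_linearFactor_le _)).1 h
  have hroots := congrArg (rootsWithInfty n) ha
  rw [rootsWithInfty_C_mul _ _ a.ne_zero, rootsWithInfty_prod_linearFactor _ fun i => rep_nonzero _,
    rootsWithInfty_prod_linearFactor _ fun i => rep_nonzero _] at hroots
  simp only [mk_rep] at hroots
  obtain ⟨σ, hσ⟩ := exists_perm_comp_eq_of_map_univ_eq hroots.symm
  exact ⟨σ, funext fun i => (OnePoint.equivProjectivization K).symm.injective (congrFun hσ i)⟩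

theorem exists_prod_linearFactor_eq_C_mul [IsAlgClosed K] (n : ℕ) {P : K[X]} (hP : P ≠ 0)
    (hdeg : P.natDegree ≤ n) :
    ∃ f : Fin n → Fin 2 → K, (∀ i, f i ≠ 0) ∧ ∃ a : Kˣ,
      C (a : K) * P = ∏ i, linearFactor (f i) := by
  induction n generalizing P with
  | zero =>
    obtain ⟨c, rfl⟩ : ∃ c, P = C c := ⟨_, eq_C_of_natDegree_eq_zero (Nat.le_zero.1 hdeg)⟩
    have hc : c ≠ 0 := C_ne_zero.1 hP
    refine ⟨Fin.elim0, fun i => i.elim0, (Units.mk0 c hc)⁻¹, ?_⟩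
    simp [← C_mul, hc]
  | succ n ih =>
    by_cases hle : P.natDegree ≤ n
    · obtain ⟨f, hf, a, ha⟩ := ih hP hle
      have hinfty : linearFactor ![1, 0] = (-1 : K[X]) := by simp [linearFactor]
      refine ⟨Fin.cons ![1, 0] f, Fin.cases (by simp) hf, -a, ?_⟩
      rw [Fin.prod_univ_succ, Fin.cons_zero, hinfty]
      simp only [Fin.cons_succ, ← ha, Units.val_neg, map_neg]
      ring
    · obtain ⟨r, hr⟩ := IsAlgClosed.exists_root P (by rw [degree_eq_natDegree hP]; norm_cast; omega)
      obtain ⟨Q, rfl⟩ : ∃ Q, P = (X - C r) * Q := ⟨_, (mul_divByMonic_eq_iff_isRoot.2 hr).symm⟩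
      have hQ : Q ≠ 0 := right_ne_zero_of_mul hP
      rw [natDegree_mul (X_sub_C_ne_zero r) hQ, natDegree_X_sub_C] at hdeg
      obtain ⟨f, hf, a, ha⟩ := ih hQ (by omega)
      have hroot : linearFactor ![r, 1] = X - C r := by simp [linearFactor]
      refine ⟨Fin.cons ![r, 1] f, Fin.cases (by simp) hf, a, ?_⟩
      rw [Fin.prod_univ_succ, Fin.cons_zero, hroot]
      simp only [Fin.cons_succ, ← ha]
      ring

theorem formOfRoots_surjective [IsAlgClosed K] (n : ℕ) :
    Function.Surjective (formOfRoots (K := K) n) := by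
  classical
  intro c
  induction c using Projectivization.ind with
  | h c hc =>
  obtain ⟨P, hdeg, rfl⟩ : ∃ P : K[X], P.natDegree ≤ n ∧ toFn (n + 1) P = c :=
    ⟨ofFn (n + 1) c, Nat.le_of_lt_succ (ofFn_natDegree_lt n.succ_pos c), toFn_comp_ofFn_eq_id _ c⟩
  have hP : P ≠ 0 := by rintro rfl; exact hc (map_zero _)
  obtain ⟨f, hf, a, ha⟩ := exists_prod_linearFactor_eq_C_mul n hP hdeg
  refine ⟨fun i => mk K (f i) (hf i), ?_⟩
  rw [formOfRoots_mk, mk_toFn_eq_mk_toFn_iff (prod_linearFactor_ne_zero hf) hP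
    (natDegree_prod_linearFactor_le _) hdeg]
  exact ⟨a, ha⟩

theorem continuous_coeff_linearFactor [TopologicalSpace K] [IsTopologicalRing K] (k : ℕ) :
    Continuous fun v : Fin 2 → K => (linearFactor v).coeff k := by
  simp only [linearFactor, coeff_sub, coeff_C_mul, coeff_C]
  split_ifs <;> fun_prop

theorem continuous_formOfRoots [TopologicalSpace K] [IsTopologicalRing K] (n : ℕ) :
    Continuous (formOfRoots (K := K) n) := by
  have hquot : IsOpenQuotientMap
      (Pi.map fun _ : Fin n => fun v : {v : Fin 2 → K // v ≠ 0} => mk K v.1 v.2) :=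
    .piMap fun _ => isOpenQuotientMap_mk K _
  rw [← hquot.continuous_comp_iff]
  have hlift : formOfRoots n ∘ Pi.map (fun _ => fun v : {v : Fin 2 → K // v ≠ 0} => mk K v.1 v.2) =
      fun F => mk K (toFn (n + 1) (∏ i, linearFactor (F i).1)) (toFn_ne_zero
        (prod_linearFactor_ne_zero fun i => (F i).2) (natDegree_prod_linearFactor_le _)) :=
    funext fun F => formOfRoots_mk (fun i => (F i).1) fun i => (F i).2
  rw [hlift]
  refine continuous_quot_mk.comp (Continuous.subtype_mk (continuous_pi fun k => ?_) _)
  change Continuous fun F : Fin n → {v : Fin 2 → K // v ≠ 0} =>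
    (∏ i, linearFactor (F i).1).coeff k
  exact continuous_coeff_prod _ (fun i _ k => (continuous_coeff_linearFactor k).comp
    (continuous_subtype_val.comp (continuous_apply i))) k

end BinaryForms

theorem SP_riemannSphere_homeomorph_projectiveSpace_general (n : ℕ) :
    Nonempty (SP n (Projectivization ℂ (Fin 2 → ℂ)) ≃ₜ
      Projectivization ℂ (Fin (n + 1) → ℂ)) :=
  ⟨SP.homeomorphOfPermFibers (formOfRoots n) (continuous_formOfRoots n)
    (formOfRoots_surjective n) fun _ _ => formOfRoots_eq_formOfRoots_iff⟩

/-- The `n`-th symmetric product of the Riemann sphere `ℙ¹(ℂ)` is homeomorphic to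
complex projective `n`-space `ℙⁿ(ℂ)`. -/
theorem SP_riemannSphere_homeomorph_projectiveSpace (n : ℕ) (hn : 1 ≤ n) :
    Nonempty (SP n (Projectivization ℂ (Fin 2 → ℂ)) ≃ₜ
      Projectivization ℂ (Fin (n + 1) → ℂ)) :=
  SP_riemannSphere_homeomorph_projectiveSpace_general n
end

section
/- For every n ≥ 2, the Laplacian Δ : MvPolynomial (Fin 3) ℝ → MvPolynomial (Fin 3) ℝ, defined by Δ P = ∑_{i : Fin 3} pderiv i (pderiv i P), maps the space of homogeneous polynomials of degree n onto the space of homogeneous polynomials of degree n − 2; that is, for every Q ∈ MvPolynomial.homogeneousSubmodule (Fin 3) ℝ (n−2) there exists P ∈ MvPolynomial.homogeneousSubmodule (Fin 3) ℝ n with Δ P = Q. -/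
open MvPolynomial Finsupp

noncomputable def lap (P : MvPolynomial (Fin 3) ℝ) : MvPolynomial (Fin 3) ℝ :=
  ∑ i : Fin 3, pderiv i (pderiv i P)

noncomputable def mon (a b c : ℕ) : MvPolynomial (Fin 3) ℝ :=
  monomial (Finsupp.single 0 a + Finsupp.single 1 b + Finsupp.single 2 c) 1

lemma lap_add (p q : MvPolynomial (Fin 3) ℝ) : lap (p + q) = lap p + lap q := by
  simp [lap, Finset.sum_add_distrib]

lemma lap_smul (r : ℝ) (p : MvPolynomial (Fin 3) ℝ) : lap (r • p) = r • lap p := by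
  simp [lap, Finset.smul_sum]

lemma lap_sub (p q : MvPolynomial (Fin 3) ℝ) : lap (p - q) = lap p - lap q := by
  simp [lap, Finset.sum_sub_distrib]

lemma mon_homog (a b c : ℕ) : (mon a b c).IsHomogeneous (a + b + c) := by
  apply isHomogeneous_monomial
  rw [Finsupp.degree_eq_weight_one]
  simp [map_add, Finsupp.weight_apply, Finsupp.sum_single_index]

lemma sub_exp0 (a b c : ℕ) :
    (Finsupp.single (0 : Fin 3) a + Finsupp.single 1 b + Finsupp.single 2 c)
      - Finsupp.single 0 1 - Finsupp.single 0 1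
    = Finsupp.single (0 : Fin 3) (a - 2) + Finsupp.single 1 b + Finsupp.single 2 c := by
  ext i; fin_cases i <;> simp [Finsupp.single_apply] <;> omega

lemma sub_exp1 (a b c : ℕ) :
    (Finsupp.single (0 : Fin 3) a + Finsupp.single 1 b + Finsupp.single 2 c)
      - Finsupp.single 1 1 - Finsupp.single 1 1
    = Finsupp.single (0 : Fin 3) a + Finsupp.single 1 (b - 2) + Finsupp.single 2 c := by
  ext i; fin_cases i <;> simp [Finsupp.single_apply] <;> omega

lemma sub_exp2 (a b c : ℕ) :
    (Finsupp.single (0 : Fin 3) a + Finsupp.single 1 b + Finsupp.single 2 c)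
      - Finsupp.single 2 1 - Finsupp.single 2 1
    = Finsupp.single (0 : Fin 3) a + Finsupp.single 1 b + Finsupp.single 2 (c - 2) := by
  ext i; fin_cases i <;> simp [Finsupp.single_apply] <;> omega

lemma lap_mon (a b c : ℕ) :
    lap (mon a b c) = ((a * (a-1) : ℕ) : ℝ) • mon (a-2) b c
      + ((b * (b-1) : ℕ) : ℝ) • mon a (b-2) c
      + ((c * (c-1) : ℕ) : ℝ) • mon a b (c-2) := by
  simp only [lap, mon, Fin.sum_univ_three, pderiv_monomial]
  rw [sub_exp0, sub_exp1, sub_exp2]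
  simp (config := { decide := true }) [Finsupp.add_apply, Finsupp.single_apply,
    Finsupp.tsub_apply, smul_monomial, Nat.cast_mul]

lemma lap_sum {α : Type*} (s : Finset α) (g : α → MvPolynomial (Fin 3) ℝ) :
    lap (∑ x ∈ s, g x) = ∑ x ∈ s, lap (g x) := by
  simp only [lap, map_sum]
  exact Finset.sum_comm

lemma key : ∀ k : ℕ, ∀ b c : ℕ, b + c ≤ k → ∀ a : ℕ,
    ∃ P : MvPolynomial (Fin 3) ℝ,
      P ∈ homogeneousSubmodule (Fin 3) ℝ (a + b + c + 2) ∧ lap P = mon a b c := by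
  intro k
  induction k using Nat.strong_induction_on with
  | _ k IH =>
  intro b c hbc a
  obtain ⟨P₁, hP₁h, hP₁⟩ :
      ∃ P₁, P₁ ∈ homogeneousSubmodule (Fin 3) ℝ (a + b + c + 2) ∧
        ((b * (b-1) : ℕ) : ℝ) • lap P₁ = ((b * (b-1) : ℕ) : ℝ) • mon (a+2) (b-2) c := by
    by_cases hb : 2 ≤ b
    · obtain ⟨P₁, h1, h2⟩ := IH (k-1) (by omega) (b-2) c (by omega) (a+2)
      refine ⟨P₁, ?_, by rw [h2]⟩
      have e : a + 2 + (b-2) + c + 2 = a + b + c + 2 := by omega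
      rwa [e] at h1
    · refine ⟨0, Submodule.zero_mem _, ?_⟩
      have e : b * (b - 1) = 0 := by
        rcases (by omega : b = 0 ∨ b = 1) with rfl | rfl <;> simp
      simp [e]
  obtain ⟨P₂, hP₂h, hP₂⟩ :
      ∃ P₂, P₂ ∈ homogeneousSubmodule (Fin 3) ℝ (a + b + c + 2) ∧
        ((c * (c-1) : ℕ) : ℝ) • lap P₂ = ((c * (c-1) : ℕ) : ℝ) • mon (a+2) b (c-2) := by
    by_cases hc : 2 ≤ c
    · obtain ⟨P₂, h1, h2⟩ := IH (k-1) (by omega) b (c-2) (by omega) (a+2)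
      refine ⟨P₂, ?_, by rw [h2]⟩
      have e : a + 2 + b + (c-2) + 2 = a + b + c + 2 := by omega
      rwa [e] at h1
    · refine ⟨0, Submodule.zero_mem _, ?_⟩
      have e : c * (c - 1) = 0 := by
        rcases (by omega : c = 0 ∨ c = 1) with rfl | rfl <;> simp
      simp [e]
  refine ⟨((((a:ℝ)+1)*((a:ℝ)+2)))⁻¹ •
      (mon (a+2) b c - ((b*(b-1):ℕ):ℝ) • P₁ - ((c*(c-1):ℕ):ℝ) • P₂), ?_, ?_⟩
  · apply Submodule.smul_mem
    apply Submodule.sub_mem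
    apply Submodule.sub_mem
    · rw [mem_homogeneousSubmodule]
      have e : a + 2 + b + c = a + b + c + 2 := by omega
      exact e ▸ mon_homog (a+2) b c
    · exact Submodule.smul_mem _ _ hP₁h
    · exact Submodule.smul_mem _ _ hP₂h
  · rw [lap_smul, lap_sub, lap_sub, lap_smul, lap_smul, lap_mon]
    have e1 : a + 2 - 2 = a := by omega
    have e2 : a + 2 - 1 = a + 1 := by omega
    rw [e1, e2, hP₁, hP₂]
    have hA : ((((a:ℝ)+1)*((a:ℝ)+2)))⁻¹ * (((a+2) * (a+1) : ℕ) : ℝ) = 1 := by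
      push_cast
      rw [inv_mul_eq_one₀ (by positivity)]
      ring
    rw [show ((((a+2) * (a+1) : ℕ)) : ℝ) • mon a b c
          + ((b*(b-1):ℕ):ℝ) • mon (a+2) (b-2) c + ((c*(c-1):ℕ):ℝ) • mon (a+2) b (c-2)
          - ((b*(b-1):ℕ):ℝ) • mon (a+2) (b-2) c - ((c*(c-1):ℕ):ℝ) • mon (a+2) b (c-2)
        = (((a+2) * (a+1) : ℕ) : ℝ) • mon a b c by abel]
    rw [smul_smul, hA, one_smul]

lemma exp_decomp (m : Fin 3 →₀ ℕ) :
    m = Finsupp.single (0 : Fin 3) (m 0) + Finsupp.single 1 (m 1) + Finsupp.single 2 (m 2) := by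
  ext i; fin_cases i <;> simp [Finsupp.single_apply]

/-- The Laplacian `Δ = ∑ᵢ ∂²/∂xᵢ²` maps homogeneous polynomials of degree `n`
(in three variables) onto homogeneous polynomials of degree `n − 2`. -/
theorem laplacian_surjective_on_homogeneous (n : ℕ) (hn : 2 ≤ n)
    (Q : MvPolynomial (Fin 3) ℝ)
    (hQ : Q ∈ MvPolynomial.homogeneousSubmodule (Fin 3) ℝ (n - 2)) :
    ∃ P : MvPolynomial (Fin 3) ℝ,
      P ∈ MvPolynomial.homogeneousSubmodule (Fin 3) ℝ n ∧
      (∑ i : Fin 3, MvPolynomial.pderiv i (MvPolynomial.pderiv i P)) = Q := by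
  have hex : ∀ m : Fin 3 →₀ ℕ, ∃ P : MvPolynomial (Fin 3) ℝ,
      P ∈ homogeneousSubmodule (Fin 3) ℝ n ∧
      (m ∈ Q.support → lap P = monomial m 1) := by
    intro m
    by_cases hm : m ∈ Q.support
    · have hdeg : m 0 + m 1 + m 2 = n - 2 := by
        have h := (mem_homogeneousSubmodule _ _).mp hQ (MvPolynomial.mem_support_iff.mp hm)
        rw [← h, Finsupp.weight_apply, Finsupp.sum_fintype _ _ (fun _ => rfl),
          Fin.sum_univ_three]
        simp
      obtain ⟨P, h1, h2⟩ := key (m 1 + m 2) (m 1) (m 2) le_rfl (m 0)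
      refine ⟨P, ?_, fun _ => ?_⟩
      · have e : m 0 + m 1 + m 2 + 2 = n := by omega
        rwa [e] at h1
      · rw [h2, mon]
        rw [← exp_decomp]
    · exact ⟨0, Submodule.zero_mem _, fun h => absurd h hm⟩
  choose f hf1 hf2 using hex
  refine ⟨∑ m ∈ Q.support, Q.coeff m • f m, ?_, ?_⟩
  · exact Submodule.sum_mem _ fun m _ => Submodule.smul_mem _ _ (hf1 m)
  · have hl : lap (∑ m ∈ Q.support, Q.coeff m • f m) = Q := by
      rw [lap_sum, Finset.sum_congr rfl
        (fun m hm => by rw [lap_smul, hf2 m hm, smul_monomial, smul_eq_mul, mul_one]),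
        support_sum_monomial_coeff]
    simpa [lap] using hl
end

section
/- For every n ≥ 0, the real vector space HP_n of harmonic homogeneous polynomials of degree n in three variables, i.e. { P ∈ MvPolynomial.homogeneousSubmodule (Fin 3) ℝ n | Δ P = 0 } where Δ P = ∑_{i : Fin 3} pderiv i (pderiv i P), has dimension exactly 2n + 1 (its finrank over ℝ equals 2n + 1). -/
/-- The Laplacian `Δ = ∑ᵢ ∂²/∂xᵢ²` on polynomials in three real variables, as a
linear map. -/
noncomputable def polyLaplacian : MvPolynomial (Fin 3) ℝ →ₗ[ℝ] MvPolynomial (Fin 3) ℝ :=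
  ∑ i : Fin 3,
    ((MvPolynomial.pderiv i).toLinearMap ∘ₗ (MvPolynomial.pderiv i).toLinearMap)

/-- The space of harmonic homogeneous polynomials of degree `n` in three variables. -/
noncomputable def harmonicHomogeneous (n : ℕ) : Submodule ℝ (MvPolynomial (Fin 3) ℝ) :=
  MvPolynomial.homogeneousSubmodule (Fin 3) ℝ n ⊓ LinearMap.ker polyLaplacian

/-!
Let `Pₙ` be the homogeneous polynomials of degree `n` and `Hₙ = Pₙ ∩ ker Δ`. The Laplacian maps
`Pₙ₊₂` onto `Pₙ`: a monomial `x₀ᵃ·m` equals `Δ(x₀ᵃ⁺²·m / ((a+2)(a+1)))` up to monomials of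
smaller degree in the remaining variables, which are handled by induction. Rank–nullity then
gives `dim Hₙ₊₂ = dim Pₙ₊₂ - dim Pₙ = (n+4 choose 2) - (n+2 choose 2) = 2n + 5`, while in degrees
`0` and `1` every homogeneous polynomial is harmonic.
-/

open MvPolynomial Finsupp

theorem Submodule.finrank_inf_ker_add_finrank_map {K V W : Type*} [DivisionRing K]
    [AddCommGroup V] [Module K V] [AddCommGroup W] [Module K W]
    (U : Submodule K V) [FiniteDimensional K U] (f : V →ₗ[K] W) :
    Module.finrank K ↥(U ⊓ LinearMap.ker f) + Module.finrank K (U.map f) =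
      Module.finrank K U := by
  rw [← (f.domRestrict U).finrank_range_add_finrank_ker, LinearMap.range_domRestrict,
    LinearMap.ker_domRestrict, add_comm]
  have hker : (LinearMap.ker f).comap U.subtype = (U ⊓ LinearMap.ker f).comap U.subtype := by
    ext x; simp
  rw [hker, (Submodule.comapSubtypeEquivOfLe (inf_le_left : U ⊓ LinearMap.ker f ≤ U)).finrank_eq]

theorem Nat.add_four_choose_add_two (m : ℕ) :
    (m + 4).choose (m + 2) = (m + 2).choose m + (2 * m + 5) := by
  rw [Nat.choose_succ_succ', Nat.choose_succ_succ', Nat.choose_succ_self_right,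
    Nat.choose_succ_self_right]
  ring

namespace MvPolynomial

variable {σ : Type*} [Fintype σ]

section Dimension

variable {R : Type*} [CommRing R]

instance (n : ℕ) : Module.Finite R (homogeneousSubmodule σ R n) :=
  Module.Finite.iff_fg.mpr (homogeneousSubmodule_fg σ R n)

theorem finrank_homogeneousSubmodule [Nontrivial R] (n : ℕ) :
    Module.finrank R (homogeneousSubmodule σ R n) = (Fintype.card σ + n - 1).choose n := by
  classical
  have hset : {d : σ →₀ ℕ | d.degree = n} = ↑((Finset.univ : Finset σ).finsuppAntidiag n) := by
    ext d; simp [degree_eq_sum]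
  let b := (basisRestrictSupport R {d : σ →₀ ℕ | d.degree = n}).map
    (LinearEquiv.ofEq _ _ (homogeneousSubmodule_eq_finsupp_supported σ R n).symm)
  rw [Module.finrank_eq_nat_card_basis b, hset, Nat.card_coe_set_eq, Set.ncard_coe_finset,
    Finset.card_finsuppAntidiag_nat_eq_choose, Finset.card_univ]

end Dimension

variable (σ) in
noncomputable def laplacian (R : Type*) [CommSemiring R] :
    MvPolynomial σ R →ₗ[R] MvPolynomial σ R :=
  ∑ i, (pderiv i).toLinearMap ∘ₗ (pderiv i).toLinearMap

section CommSemiring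

variable {R : Type*} [CommSemiring R]

theorem laplacian_apply (p : MvPolynomial σ R) :
    laplacian σ R p = ∑ i, pderiv i (pderiv i p) := by
  simp [laplacian]

theorem laplacian_monomial (d : σ →₀ ℕ) (a : R) :
    laplacian σ R (monomial d a) =
      ∑ i, monomial (d - single i 2) (a * d i * (d i - 1 : ℕ)) := by
  simp only [laplacian_apply, pderiv_monomial, tsub_apply, single_eq_same, mul_assoc, tsub_tsub,
    ← single_add]

theorem IsHomogeneous.laplacian {p : MvPolynomial σ R} {n : ℕ} (h : p.IsHomogeneous n) :
    (laplacian σ R p).IsHomogeneous (n - 2) := by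
  rw [laplacian_apply]
  exact Submodule.sum_mem (homogeneousSubmodule σ R _) fun i _ =>
    (Nat.sub_sub n 1 1 ▸ h.pderiv.pderiv : (pderiv i (pderiv i p)).IsHomogeneous (n - 2))

theorem laplacian_eq_zero_of_isHomogeneous {p : MvPolynomial σ R} {n : ℕ}
    (h : p.IsHomogeneous n) (hn : n ≤ 1) : laplacian σ R p = 0 := by
  rw [laplacian_apply]
  refine Finset.sum_eq_zero fun i _ => ?_
  have hconst : (pderiv i p).IsHomogeneous 0 := Nat.sub_eq_zero_of_le hn ▸ h.pderiv
  rw [← totalDegree_zero_iff_isHomogeneous, totalDegree_eq_zero_iff_eq_C] at hconst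
  rw [hconst, pderiv_C]

end CommSemiring

section Field

variable {K : Type*} [Field K] [CharZero K]

theorem monomial_mem_map_laplacian (i₀ : σ) (d : σ →₀ ℕ) :
    monomial d (1 : K) ∈ (homogeneousSubmodule σ K (d.degree + 2)).map (laplacian σ K) := by
  classical
  -- `d.degree - d i₀` is the degree of `d` in the variables other than `i₀`.
  induction hk : d.degree - d i₀ using Nat.strong_induction_on generalizing d with
  | _ k ih =>
  set e := d + single i₀ 2
  set c : K := (((d i₀ + 2) * (d i₀ + 1) : ℕ) : K)⁻¹
  have he : (monomial e c).IsHomogeneous (d.degree + 2) :=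
    isHomogeneous_monomial _ (by simp [e])
  have hmain : monomial (e - single i₀ 2) (c * e i₀ * (e i₀ - 1 : ℕ)) = monomial d (1 : K) := by
    have he₀ : e i₀ = d i₀ + 2 := by simp [e]
    have hc : (((d i₀ + 2) * (d i₀ + 1) : ℕ) : K) ≠ 0 := Nat.cast_ne_zero.mpr (by positivity)
    rw [he₀, Nat.add_succ_sub_one, mul_assoc, ← Nat.cast_mul, inv_mul_cancel₀ hc,
      add_tsub_cancel_right]
  have hside : ∀ i ≠ i₀, monomial (e - single i 2) (c * e i * (e i - 1 : ℕ)) ∈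
      (homogeneousSubmodule σ K (d.degree + 2)).map (laplacian σ K) := by
    intro i hi
    have hei : e i = d i := by simp [e, Ne.symm hi]
    rw [hei]
    by_cases h2 : 2 ≤ d i
    · set d' := e - single i 2
      have hd' : d' + single i 2 = e := tsub_add_cancel_of_le (single_le_iff.mpr (hei ▸ h2))
      have hdeg : d'.degree = d.degree := by
        simpa [e] using congrArg degree hd'
      have hi₀ : d' i₀ = d i₀ + 2 := by
        simpa [e, single_apply, hi] using congrArg (· i₀) hd'
      have hlt : d'.degree - d' i₀ < k := by
        have := le_degree i₀ d'
        omega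
      rw [← mul_one (c * _ * _), ← smul_eq_mul, ← smul_monomial, ← hdeg]
      exact Submodule.smul_mem _ _ (ih _ hlt d' rfl)
    · have hzero : d i * (d i - 1) = 0 := by interval_cases (d i) <;> rfl
      rw [mul_assoc, ← Nat.cast_mul, hzero, Nat.cast_zero, mul_zero, monomial_zero]
      exact zero_mem _
  have hsum := laplacian_monomial e c
  rw [Fintype.sum_eq_add_sum_compl i₀, hmain] at hsum
  rw [eq_sub_of_add_eq hsum.symm]
  exact sub_mem (Submodule.mem_map_of_mem he)
    (sum_mem fun i hi => hside i (by simpa using hi))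

theorem map_laplacian_homogeneousSubmodule (i₀ : σ) (n : ℕ) :
    (homogeneousSubmodule σ K (n + 2)).map (laplacian σ K) = homogeneousSubmodule σ K n := by
  refine le_antisymm (Submodule.map_le_iff_le_comap.mpr fun p hp => ?_) ?_
  · simpa using hp.laplacian
  · rw [homogeneousSubmodule_eq_finsupp_supported, AddMonoidAlgebra.supported_eq_span_single,
      Submodule.span_le]
    rintro _ ⟨d, rfl : d.degree = n, rfl⟩
    exact monomial_mem_map_laplacian i₀ d

theorem finrank_harmonic_add_finrank_homogeneousSubmodule (i₀ : σ) (n : ℕ) :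
    Module.finrank K ↥(homogeneousSubmodule σ K (n + 2) ⊓ LinearMap.ker (laplacian σ K)) +
      Module.finrank K (homogeneousSubmodule σ K n) =
        Module.finrank K (homogeneousSubmodule σ K (n + 2)) := by
  rw [← map_laplacian_homogeneousSubmodule i₀ n, Submodule.finrank_inf_ker_add_finrank_map]

end Field

end MvPolynomial

theorem harmonicHomogeneous_eq (n : ℕ) :
    harmonicHomogeneous n =
      homogeneousSubmodule (Fin 3) ℝ n ⊓ LinearMap.ker (laplacian (Fin 3) ℝ) :=
  rfl

/-- The space of harmonic homogeneous polynomials of degree `n` in three variables has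
dimension `2n + 1`. -/
theorem finrank_harmonicHomogeneous (n : ℕ) :
    Module.finrank ℝ (harmonicHomogeneous n) = 2 * n + 1 := by
  rw [harmonicHomogeneous_eq]
  rcases Nat.lt_or_ge n 2 with hn | hn
  · rw [inf_eq_left.mpr fun p hp => laplacian_eq_zero_of_isHomogeneous hp (by omega),
      finrank_homogeneousSubmodule]
    interval_cases n <;> rfl
  · obtain ⟨m, rfl⟩ := Nat.exists_eq_add_of_le' hn
    have h := finrank_harmonic_add_finrank_homogeneousSubmodule (K := ℝ) (0 : Fin 3) m
    rw [finrank_homogeneousSubmodule, finrank_homogeneousSubmodule, Fintype.card_fin,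
      show 3 + (m + 2) - 1 = m + 4 by omega, show 3 + m - 1 = m + 2 by omega,
      Nat.add_four_choose_add_two] at h
    omega
end

section
/- (Generating function for Euler characteristics of symmetric products, algebraic form) For every commutative ℚ-algebra R, every c ∈ R, and every n ≥ 0: (1/n!) · ∑_{σ ∈ Equiv.Perm (Fin n)} c^{(number of orbits of σ on Fin n)} equals the coefficient of t^n in the binomial expansion of (1 − t)^{−c}, namely (1/n!) · c·(c+1)·…·(c+n−1) (the rising factorial divided by n!). Equivalently, ∑_{n ≥ 0} t^n · (1/n!) · ∑_{σ ∈ Equiv.Perm (Fin n)} c^{#orbits(σ)} = exp( ∑_{r ≥ 1} (c/r) t^r ) in R⟦t⟧. (Applied with c = χ(X), this is the formula ∑_n q^n χ(SP^n(X)) = (1−q)^{−χ(X)}.) -/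
/-- The number of orbits of a permutation of `Fin n`, counting all cycles and all
fixed points. -/
def numOrbits {n : ℕ} (σ : Equiv.Perm (Fin n)) : ℕ :=
  σ.cycleType.card + (n - σ.cycleType.sum)

/-- Substitution of a power series `S` (with zero constant coefficient) into the
exponential series `∑ₖ tᵏ/k!`: the `n`-th coefficient of `exp(S)` is
`∑_{k ≤ n} (1/k!) · coeff n (S^k)` (the sum truncates since `S^k` has order `≥ k`). -/
noncomputable def expSubst {R : Type*} [CommRing R] [Algebra ℚ R]
    (S : PowerSeries R) : PowerSeries R :=
  PowerSeries.mk fun n => ∑ k ∈ Finset.range (n + 1),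
    PowerSeries.coeff k (PowerSeries.exp ℚ) • PowerSeries.coeff n (S ^ k)

/-!
Deleting `0` from its cycle identifies `Perm (Fin (n + 1))` with `Fin (n + 1) × Perm (Fin n)`
(`Equiv.Perm.decomposeFin`): either `0` becomes a new fixed point, adding one orbit, or it is
inserted into a cycle just before one of the other `n` points, leaving the number of orbits
unchanged.
Hence `Pₙ = ∑_σ c^{#orbits σ}` satisfies `Pₙ₊₁ = (c + n) Pₙ`, i.e. `Pₙ = c(c+1)⋯(c+n-1)`.

On the series side, `S = ∑_{r ≥ 1} (c/r) tʳ` has `(1 - t) S' = c`, so by the chain rule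
`E = exp S` satisfies `(1 - t) E' = c E`, i.e. `(n + 1) eₙ₊₁ = (c + n) eₙ`, with `e₀ = 1`.
-/

open Equiv Finset PowerSeries

namespace Equiv.Perm

variable {α : Type*} [DecidableEq α]

theorem disjoint_swap_of_apply_eq_self {f : Perm α} {a b : α} (ha : f a = a) (hb : f b = b) :
    Disjoint f (swap a b) := fun x => by
  by_cases hx : x = a ∨ x = b
  · rcases hx with rfl | rfl <;> exact Or.inl ‹_›
  · obtain ⟨hxa, hxb⟩ := not_or.1 hx
    exact Or.inr (swap_apply_of_ne_of_ne hxa hxb)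

variable [Fintype α]

theorem cycleType_formPerm_of_nodup {l : List α} (hl : l.Nodup) (hn : 2 ≤ l.length) :
    (List.formPerm l).cycleType = {l.length} := by
  rw [(List.isCycle_formPerm hl hn).cycleType,
    List.support_formPerm_of_nodup l hl fun x hx => by simp [hx] at hn, List.card_toFinset,
    List.dedup_eq_self.mpr hl]

theorem IsCycle.cycleType_swap_mul_of_notMem_support {c : Perm α} (hc : c.IsCycle) {a b : α}
    (ha : a ∈ c.support) (hb : b ∉ c.support) :
    (swap a b * c).cycleType = {#c.support + 1} := by
  have hca : c.cycleOf a = c := hc.cycleOf_eq (mem_support.1 ha)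
  obtain ⟨k, hk⟩ : ∃ k, #c.support = k + 1 :=
    Nat.exists_eq_succ_of_ne_zero (card_pos.2 ⟨a, ha⟩).ne'
  obtain ⟨t, ht⟩ : ∃ t, c.toList a = a :: t := ⟨_, by rw [toList, hca, hk]; rfl⟩
  have hlen : #c.support = t.length + 1 := by
    rw [← hca, ← length_toList, ht, List.length_cons]
  have hnd : (b :: a :: t).Nodup := by
    rw [← ht]
    exact List.nodup_cons.2 ⟨fun hmem => hb ((mem_toList_iff.1 hmem).1.mem_support_iff.1 ha),
      nodup_toList c a⟩
  have hform : (a :: t).formPerm = c := by rw [← ht, formPerm_toList, hca]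
  rw [hlen, ← hform, swap_comm, ← List.formPerm_cons_cons,
    cycleType_formPerm_of_nodup hnd (by simp), List.length_cons, List.length_cons]

theorem cycleType_swap_mul_of_apply_eq_self {g : Perm α} {a b : α} (hab : a ≠ b)
    (ha : g a = a) (hb : g b = b) :
    (swap a b * g).cycleType = 2 ::ₘ g.cycleType := by
  rw [(disjoint_swap_of_apply_eq_self ha hb).symm.cycleType_mul, (isCycle_swap hab).cycleType,
    card_support_swap hab]
  rfl

theorem cycleType_swap_mul_of_apply_ne_self {g : Perm α} {a b : α}
    (ha : g a ≠ a) (hb : g b = b) :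
    ∃ m k, g.cycleType = k ::ₘ m ∧ (swap a b * g).cycleType = (k + 1) ::ₘ m := by
  set c := g.cycleOf a
  set h := g * c⁻¹
  have hc : c.IsCycle := isCycle_cycleOf g ha
  have hac : a ∈ c.support := mem_support_cycleOf_iff.2 ⟨SameCycle.refl g a, mem_support.2 ha⟩
  have hbc : b ∉ c.support := fun hb' => mem_support.1 (support_cycleOf_le g a hb') hb
  have hhc : Disjoint h c := disjoint_mul_inv_of_mem_cycleFactorsFinset
    (cycleOf_mem_cycleFactorsFinset_iff.2 (mem_support.2 ha))
  have hha : h a = a := (hhc a).resolve_right (mem_support.1 hac)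
  have hhb : h b = b := by
    simp only [h, mul_apply, inv_eq_iff_eq.2 (notMem_support.1 hbc).symm, hb]
  have hhs : Disjoint h (swap a b) := disjoint_swap_of_apply_eq_self hha hhb
  have hg : g = h * c := (inv_mul_cancel_right g c).symm
  refine ⟨h.cycleType, #c.support, ?_, ?_⟩
  · rw [hg, hhc.cycleType_mul, hc.cycleType, add_comm]; rfl
  · rw [hg, ← mul_assoc, ← hhs.commute.eq, mul_assoc, (hhs.mul_right hhc).cycleType_mul,
      hc.cycleType_swap_mul_of_notMem_support hac hbc, add_comm]
    rfl

theorem card_parts_partition_swap_mul_add_one {g : Perm α} {a b : α} (hab : a ≠ b)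
    (hb : g b = b) :
    (swap a b * g).partition.parts.card + 1 = g.partition.parts.card := by
  simp only [parts_partition, Multiset.card_add, Multiset.card_replicate, ← sum_cycleType]
  have hle := sum_cycleType_le (swap a b * g)
  by_cases ha : g a = a
  · rw [cycleType_swap_mul_of_apply_eq_self hab ha hb] at hle ⊢
    simp only [Multiset.card_cons, Multiset.sum_cons] at hle ⊢
    omega
  · obtain ⟨m, k, hg, hsg⟩ := cycleType_swap_mul_of_apply_ne_self (b := b) ha hb
    rw [hg, hsg]
    rw [hsg] at hle
    simp only [Multiset.card_cons, Multiset.sum_cons] at hle ⊢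
    omega

theorem decomposeFin_symm_zero {n : ℕ} (e : Perm (Fin n)) :
    decomposeFin.symm (0, e) = e.extendDomain (finSuccAboveEquiv 0) := by
  ext x
  refine Fin.cases ?_ (fun i => ?_) x
  · rw [decomposeFin_symm_apply_zero, extendDomain_apply_not_subtype _ _ (by simp)]
  · rw [decomposeFin_symm_apply_succ, swap_self, refl_apply,
      show i.succ = (finSuccAboveEquiv 0 i : Fin (n + 1)) from rfl, extendDomain_apply_image]
    rfl

theorem decomposeFin_symm_eq_swap_mul {n : ℕ} (p : Fin (n + 1)) (e : Perm (Fin n)) :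
    decomposeFin.symm (p, e) = swap 0 p * decomposeFin.symm (0, e) := by
  ext x
  refine Fin.cases ?_ (fun i => ?_) x <;> simp [decomposeFin_symm_apply_succ]

end Equiv.Perm

open Equiv.Perm

theorem numOrbits_eq_card_parts_partition {n : ℕ} (σ : Perm (Fin n)) :
    numOrbits σ = σ.partition.parts.card := by
  rw [numOrbits, parts_partition, Multiset.card_add, Multiset.card_replicate, sum_cycleType,
    Fintype.card_fin]

theorem numOrbits_decomposeFin_symm_zero {n : ℕ} (e : Perm (Fin n)) :
    numOrbits (decomposeFin.symm (0, e)) = numOrbits e + 1 := by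
  have hle := e.sum_cycleType_le
  rw [Fintype.card_fin] at hle
  rw [numOrbits, numOrbits, decomposeFin_symm_zero, cycleType_extendDomain]
  omega

theorem numOrbits_decomposeFin_symm_succ {n : ℕ} (i : Fin n) (e : Perm (Fin n)) :
    numOrbits (decomposeFin.symm (i.succ, e)) = numOrbits e := by
  have h := card_parts_partition_swap_mul_add_one (Fin.succ_ne_zero i)
    (decomposeFin_symm_apply_zero 0 e)
  rw [swap_comm, ← decomposeFin_symm_eq_swap_mul, ← numOrbits_eq_card_parts_partition,
    ← numOrbits_eq_card_parts_partition, numOrbits_decomposeFin_symm_zero] at h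
  omega

theorem sum_pow_numOrbits_succ {R : Type*} [CommSemiring R] (c : R) (n : ℕ) :
    ∑ σ : Perm (Fin (n + 1)), c ^ numOrbits σ =
      (c + n) * ∑ σ : Perm (Fin n), c ^ numOrbits σ := by
  rw [← decomposeFin.symm.sum_comp, Fintype.sum_prod_type, Fin.sum_univ_succ]
  simp only [numOrbits_decomposeFin_symm_zero, numOrbits_decomposeFin_symm_succ, sum_const,
    card_univ, Fintype.card_fin, pow_succ, ← sum_mul, nsmul_eq_mul]
  ring

theorem sum_pow_numOrbits {R : Type*} [CommSemiring R] (c : R) (n : ℕ) :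
    ∑ σ : Perm (Fin n), c ^ numOrbits σ = ∏ k ∈ range n, (c + k) := by
  induction n with
  | zero => simp [numOrbits]
  | succ n ih => rw [sum_pow_numOrbits_succ, ih, prod_range_succ, mul_comm]

section PowerSeries

variable {R : Type*} [CommRing R]

theorem succ_mul_coeff_succ_of_one_sub_X_mul_derivative_eq {c : R} {F : R⟦X⟧}
    (hF : (1 - X) * d⁄dX R F = C c * F) (n : ℕ) :
    (n + 1) * coeff (n + 1) F = (c + n) * coeff n F := by
  have h : d⁄dX R F = C c * F + X * d⁄dX R F := by linear_combination hF
  have hn := congrArg (coeff n) h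
  rw [map_add, coeff_C_mul, coeff_derivative] at hn
  cases n with
  | zero => simpa [mul_comm] using hn
  | succ n =>
    rw [coeff_succ_X_mul, coeff_derivative] at hn
    push_cast at hn ⊢
    linear_combination hn

variable [Algebra ℚ R]

theorem coeff_eq_of_one_sub_X_mul_derivative_eq {c : R} {F : R⟦X⟧}
    (hF : (1 - X) * d⁄dX R F = C c * F) (n : ℕ) :
    coeff n F = (n.factorial : ℚ)⁻¹ • ((∏ k ∈ range n, (c + k)) * constantCoeff F) := by
  suffices h : (n.factorial : R) * coeff n F = (∏ k ∈ range n, (c + k)) * constantCoeff F by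
    rw [← h, ← nsmul_eq_mul, ← Nat.cast_smul_eq_nsmul ℚ, inv_smul_smul₀ (by positivity)]
  induction n with
  | zero => simp
  | succ n ih =>
    rw [prod_range_succ, Nat.factorial_succ, Nat.cast_mul, Nat.cast_succ]
    linear_combination
      (n.factorial : R) * succ_mul_coeff_succ_of_one_sub_X_mul_derivative_eq hF n + (c + n) * ih

theorem expSubst_eq_subst_exp {S : R⟦X⟧} (hS : constantCoeff S = 0) :
    expSubst S = (exp R).subst S := by
  ext n
  have hvanish : ∀ k, n < k → coeff n (S ^ k) = 0 := fun k hk =>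
    X_pow_dvd_iff.1 (pow_dvd_pow_of_dvd (X_dvd_iff.2 hS) k) n hk
  rw [expSubst, coeff_mk, coeff_subst' (HasSubst.of_constantCoeff_zero' hS),
    finsum_eq_sum_of_support_subset _ (s := range (n + 1)) fun k hk => by
      by_contra hkn
      exact hk (by simp [hvanish k (by simpa [Nat.lt_succ_iff] using hkn)])]
  refine sum_congr rfl fun k _ => ?_
  rw [coeff_exp, coeff_exp, Algebra.smul_def, smul_eq_mul, map_div₀, map_one]
  rfl

theorem constantCoeff_expSubst (S : R⟦X⟧) : constantCoeff (expSubst S) = 1 := by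
  rw [← coeff_zero_eq_constantCoeff_apply, expSubst, coeff_mk]
  simp

theorem derivative_expSubst {S : R⟦X⟧} (hS : constantCoeff S = 0) :
    d⁄dX R (expSubst S) = expSubst S * d⁄dX R S := by
  rw [expSubst_eq_subst_exp hS, derivative_subst (HasSubst.of_constantCoeff_zero' hS),
    derivative_exp]

/-- `-c · log (1 - t)`. -/
noncomputable def logSeries (c : R) : R⟦X⟧ :=
  PowerSeries.mk fun r => if r = 0 then 0 else (r : ℚ)⁻¹ • c

theorem one_sub_X_mul_derivative_logSeries (c : R) :
    (1 - X) * d⁄dX R (logSeries c) = C c := by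
  have h : d⁄dX R (logSeries c) = C c * PowerSeries.mk 1 := by
    ext n
    rw [coeff_derivative, logSeries, coeff_mk, if_neg n.succ_ne_zero, coeff_C_mul, coeff_mk,
      Pi.one_apply, mul_one, smul_mul_assoc, ← Nat.cast_succ, mul_comm c, ← nsmul_eq_mul,
      ← Nat.cast_smul_eq_nsmul ℚ, smul_smul, inv_mul_cancel₀ (by positivity), one_smul]
  rw [h, mul_left_comm, mul_comm _ (PowerSeries.mk 1), mk_one_mul_one_sub_eq_one, mul_one]

theorem coeff_expSubst_logSeries (c : R) (n : ℕ) :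
    coeff n (expSubst (logSeries c)) = (n.factorial : ℚ)⁻¹ • ∏ k ∈ range n, (c + k) := by
  have hS : constantCoeff (logSeries c) = 0 := by
    rw [← coeff_zero_eq_constantCoeff_apply, logSeries, coeff_mk, if_pos rfl]
  have hE : (1 - X) * d⁄dX R (expSubst (logSeries c)) = C c * expSubst (logSeries c) := by
    rw [derivative_expSubst hS, mul_left_comm, one_sub_X_mul_derivative_logSeries, mul_comm]
  rw [coeff_eq_of_one_sub_X_mul_derivative_eq hE, constantCoeff_expSubst, mul_one]

end PowerSeries

/-- Generating function for Euler characteristics of symmetric products, algebraic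
form: for `c` in a commutative `ℚ`-algebra, `(1/n!) ∑_{σ ∈ Sₙ} c^{#orbits(σ)}` is the
`n`-th coefficient of `(1 − t)^{−c}`, namely `c(c+1)⋯(c+n−1)/n!`; equivalently,
`∑ₙ tⁿ (1/n!) ∑_{σ ∈ Sₙ} c^{#orbits(σ)} = exp (∑_{r ≥ 1} (c/r) tʳ)`. -/
theorem eulerChar_symmetricProduct_generatingFunction
    (R : Type*) [CommRing R] [Algebra ℚ R] (c : R) :
    (∀ n : ℕ,
      (↑n.factorial : ℚ)⁻¹ • ∑ σ : Equiv.Perm (Fin n), c ^ numOrbits σ =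
        (↑n.factorial : ℚ)⁻¹ • ∏ k ∈ Finset.range n, (c + (k : R))) ∧
    (PowerSeries.mk fun n =>
        (↑n.factorial : ℚ)⁻¹ • ∑ σ : Equiv.Perm (Fin n), c ^ numOrbits σ) =
      expSubst (PowerSeries.mk fun r =>
        if r = 0 then 0 else ((r : ℚ)⁻¹) • c) := by
  refine ⟨fun n => by rw [sum_pow_numOrbits], ?_⟩
  ext n
  rw [coeff_mk, sum_pow_numOrbits]
  exact (coeff_expSubst_logSeries c n).symm
end

section
/- (χ_y-genus of symmetric products of a curve, algebraic form) Let g ≥ 1 and n ≥ 0 be natural numbers. In the polynomial ring ℚ[y], one has the identity (1/n!) · ∑_{σ ∈ Equiv.Perm (Fin n)} ∏_{r ∈ full cycle type of σ} (1 − g)·(1 + (−y)^r) = (coefficient of t^n in the polynomial ((1 − t)·(1 + y·t))^{g−1} ∈ (ℚ[y])[t]). Here the full cycle type of σ is the multiset of lengths of all orbits of σ on Fin n, including a part 1 for each fixed point. (This identity expresses the result ∑_{n≥1} χ_y(SP^n(S_g)) tⁿ = ((1−t)(1+yt))^{g−1}, since the equivariant χ_y-genus of the r-cycle acting on the r-fold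 power of a genus-g curve equals (1−g)(1+(−y)^r).) -/
/-!
Write `g = m + 1` and let `v` be the family of `2m` weights made of `m` copies of `y` and `m`
copies of `-1`. Then `((1 - t)(1 + y t))^m = ∏ₖ (1 + vₖ t)`, whose `tⁿ`-coefficient is the
elementary symmetric function `eₙ(v)`, and the factor attached to a part `r` is
`(1 - g)(1 + (-y)^r) = (-1)^(r+1) pᵣ(v)` with `pᵣ` the `r`-th power sum. As
`∏ (-1)^(r+1)` over the full cycle type of `σ` is `sign σ`, the claim is the classical identity
`n! eₙ = ∑_σ sign σ ∏_{r} pᵣ`. To prove it, sum over colourings `F : Fin n → weights`: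
`∏_{r} pᵣ(v)` is the weighted count of the `σ`-invariant colourings, and the signs of the
permutations fixing `F` add up to `1` if `F` is injective and to `0` otherwise (a transposition
of two points of equal colour pairs them off), which leaves `n! eₙ(v)`.
-/

/-- The full cycle type of a permutation of `Fin n`: the multiset of lengths of all
its orbits, i.e. its cycle type together with a part `1` for each fixed point. -/
def fullCycleType {n : ℕ} (σ : Equiv.Perm (Fin n)) : Multiset ℕ :=
  σ.cycleType + Multiset.replicate (n - σ.cycleType.sum) 1

open Finset Polynomial

theorem Fintype.card_filter_injective_image_eq_factorial {α K : Type*} [Fintype α]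
    [DecidableEq α] [Fintype K] [DecidableEq K] {t : Finset K} (ht : #t = Fintype.card α) :
    #{F : α → K | F.Injective ∧ univ.image F = t} = (Fintype.card α).factorial := by
  rw [← Fintype.card_equiv (Fintype.equivOfCardEq (ht.symm.trans (Fintype.card_coe t).symm)),
    ← card_univ]
  symm
  refine card_bij (fun e _ a => (e a : K)) (fun e _ => ?_) (fun e₁ _ e₂ _ h => ?_)
    (fun F hF => ?_)
  · refine mem_filter.mpr ⟨mem_univ _, Subtype.val_injective.comp e.injective, ?_⟩
    ext k
    simp only [mem_image, mem_univ, true_and]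
    exact ⟨fun ⟨a, ha⟩ => ha ▸ (e a).2, fun hk => ⟨e.symm ⟨k, hk⟩, by simp⟩⟩
  · exact Equiv.ext fun a => Subtype.ext (congrFun h a)
  · obtain ⟨hinj, rfl⟩ := (mem_filter.mp hF).2
    refine ⟨.ofBijective (fun a => ⟨F a, mem_image_of_mem F (mem_univ a)⟩) ⟨?_, ?_⟩,
      mem_univ _, rfl⟩
    · exact fun a b h => hinj (congrArg Subtype.val h)
    · rintro ⟨k, hk⟩
      obtain ⟨a, -, rfl⟩ := mem_image.mp hk
      exact ⟨a, rfl⟩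

theorem Fintype.sum_injective_prod_eq_factorial_mul_esymm {α K R : Type*} [Fintype α]
    [DecidableEq α] [Fintype K] [DecidableEq K] [CommSemiring R] (w : K → R) :
    ∑ F : α → K with F.Injective, ∏ a, w (F a) =
      (Fintype.card α).factorial * (univ.val.map w).esymm (Fintype.card α) := by
  rw [esymm_map_val]
  have image_mem : ∀ F ∈ ({F : α → K | F.Injective} : Finset _),
      univ.image F ∈ powersetCard (Fintype.card α) univ := fun F hF =>
    mem_powersetCard.mpr ⟨subset_univ _, card_image_of_injective _ (mem_filter.mp hF).2⟩
  rw [← sum_fiberwise_of_maps_to image_mem, mul_sum]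
  refine Finset.sum_congr rfl fun t ht => ?_
  rw [filter_filter, Finset.sum_congr rfl fun F hF => ?_, sum_const, nsmul_eq_mul,
    card_filter_injective_image_eq_factorial (mem_powersetCard.mp ht).2]
  obtain ⟨hinj, rfl⟩ := (mem_filter.mp hF).2
  rw [prod_image fun a _ b _ h => hinj h]

theorem Finset.prod_one_add_C_mul_X_coeff {K R : Type*} [CommSemiring R] (s : Finset K)
    (w : K → R) (n : ℕ) :
    (∏ k ∈ s, (1 + C (w k) * X)).coeff n = (s.val.map w).esymm n := by
  rw [esymm_map_val]
  simp_rw [prod_one_add, prod_mul_distrib, prod_const, ← map_prod, finsetSum_coeff,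
    coeff_C_mul_X_pow]
  rw [powersetCard_eq_filter, sum_filter]
  simp_rw [eq_comm]

namespace Equiv.Perm

variable {α : Type*} [Fintype α] [DecidableEq α]

omit [Fintype α] [DecidableEq α] in
theorem SameCycle.apply_eq_of_comp_eq_self [Finite α] {K : Type*} {σ : Perm α} {F : α → K}
    (hF : F ∘ σ = F) {a b : α} (h : σ.SameCycle a b) : F a = F b := by
  obtain ⟨i, rfl⟩ := h.exists_nat_pow_eq
  have : Function.Semiconj F σ id := fun x => congrFun hF x
  rw [coe_pow, this.iterate_right i, Function.iterate_id, id]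

theorem filter_sameCycle_of_mem_support {σ : Perm α} {a : α} (ha : a ∈ σ.support) :
    univ.filter (σ.SameCycle a) = (σ.cycleOf a).support := by
  ext b
  rw [mem_filter, mem_support_cycleOf_iff' (mem_support.mp ha)]
  simp

theorem filter_sameCycle_of_notMem_support {σ : Perm α} {a : α} (ha : a ∉ σ.support) :
    univ.filter (σ.SameCycle a) = {a} := by
  ext b
  simp only [mem_filter, mem_univ, true_and, mem_singleton]
  exact ⟨fun h => (h.eq_of_left (notMem_support.mp ha)).symm, fun h => h ▸ .refl _ _⟩

section Classes

variable (σ : Perm α)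

omit [Fintype α] [DecidableEq α] in
theorem sameCycle_out_mk (a : α) : σ.SameCycle (⟦a⟧ : Quotient (SameCycle.setoid σ)).out a :=
  Quotient.mk_out (s := SameCycle.setoid σ) a

open scoped Classical

theorem filter_mk_eq_filter_sameCycle_out (O : Quotient (SameCycle.setoid σ)) :
    univ.filter (fun a => ⟦a⟧ = O) = univ.filter (σ.SameCycle O.out) := by
  ext a
  rw [mem_filter, mem_filter, ← O.out_eq, Quotient.eq, O.out_eq]
  exact and_congr_right fun _ => ⟨SameCycle.symm, SameCycle.symm⟩

theorem prod_sameCycle_classes_of_mem_support {M : Type*} [CommMonoid M] (f : Perm α → M) :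
    ∏ O : Quotient (SameCycle.setoid σ) with O.out ∈ σ.support, f (σ.cycleOf O.out) =
      ∏ c ∈ σ.cycleFactorsFinset, f c := by
  refine prod_bij (fun O _ => σ.cycleOf O.out) (fun O hO => ?_) (fun O₁ h₁ O₂ h₂ h => ?_)
    (fun c hc => ?_) (fun _ _ => rfl)
  · exact cycleOf_mem_cycleFactorsFinset_iff.mpr (mem_filter.mp hO).2
  · rw [← O₁.out_eq, ← O₂.out_eq, Quotient.eq]
    exact (sameCycle_iff_cycleOf_eq_of_mem_support (mem_filter.mp h₁).2
      (mem_filter.mp h₂).2).mpr h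
  · obtain ⟨a, ha⟩ := (mem_cycleFactorsFinset_iff.mp hc).1.nonempty_support
    have hsame := sameCycle_out_mk σ a
    refine ⟨⟦a⟧, mem_filter.mpr ⟨mem_univ _, ?_⟩, ?_⟩
    · exact hsame.mem_support_iff.mpr (mem_cycleFactorsFinset_support_le hc ha)
    · rw [hsame.cycleOf_eq, ← cycle_is_cycleOf ha hc]

theorem card_sameCycle_classes_notMem_support :
    #{O : Quotient (SameCycle.setoid σ) | O.out ∉ σ.support} =
      Fintype.card α - #σ.support := by
  have out_mk {a : α} (ha : a ∉ σ.support) :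
      (⟦a⟧ : Quotient (SameCycle.setoid σ)).out = a :=
    (sameCycle_out_mk σ a).eq_of_right (notMem_support.mp ha)
  rw [← card_compl]
  refine card_nbij' (·.out) (⟦·⟧) (fun O hO => ?_) (fun a ha => ?_) (fun O _ => O.out_eq)
    (fun a ha => out_mk (mem_compl.mp ha))
  · simpa using hO
  · simpa [out_mk (mem_compl.mp ha)] using ha

theorem prod_card_sameCycle_classes {M : Type*} [CommMonoid M] (f : ℕ → M) :
    ∏ O : Quotient (SameCycle.setoid σ), f #{a | ⟦a⟧ = O} =
      (σ.partition.parts.map f).prod := by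
  rw [parts_partition, Multiset.map_add, Multiset.prod_add, Multiset.map_replicate,
    Multiset.prod_replicate, ← card_sameCycle_classes_notMem_support, ← prod_const,
    cycleType_def, Multiset.map_map, ← prod_eq_multiset_prod,
    ← prod_sameCycle_classes_of_mem_support, ← prod_filter_mul_prod_filter_not _
      fun O => O.out ∈ σ.support]
  congr 1 <;> refine prod_congr rfl fun O hO => ?_ <;> rw [filter_mk_eq_filter_sameCycle_out]
  · rw [filter_sameCycle_of_mem_support (mem_filter.mp hO).2]
    rfl
  · rw [filter_sameCycle_of_notMem_support (mem_filter.mp hO).2, card_singleton]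

end Classes

theorem sum_prod_filter_comp_eq_self {R K : Type*} [CommSemiring R] [Fintype K] [DecidableEq K]
    (σ : Perm α) (w : K → R) :
    ∑ F : α → K with F ∘ σ = F, ∏ a, w (F a) =
      (σ.partition.parts.map fun r => ∑ k, w k ^ r).prod := by
  classical
  let Q := Quotient (SameCycle.setoid σ)
  have invariant_eq_lift : ∑ F : α → K with F ∘ σ = F, ∏ a, w (F a) =
      ∑ G : Q → K, ∏ a, w (G ⟦a⟧) := by
    refine sum_nbij' (fun F O => F O.out) (fun G a => G ⟦a⟧) (fun _ _ => mem_univ _)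
      (fun G _ => ?_) (fun F hF => ?_) (fun G _ => funext fun O => congrArg G O.out_eq)
      (fun F hF => ?_)
    · simp only [mem_filter, mem_univ, true_and]
      exact funext fun a => congrArg G (Quotient.sound (sameCycle_apply_left.mpr (.refl _ _)))
    · simp only [mem_filter, mem_univ, true_and] at hF
      exact funext fun a => (sameCycle_out_mk σ a).apply_eq_of_comp_eq_self hF
    · simp only [mem_filter, mem_univ, true_and] at hF
      exact prod_congr rfl fun a _ =>
        congrArg w ((sameCycle_out_mk σ a).apply_eq_of_comp_eq_self hF).symm
  rw [invariant_eq_lift, ← prod_card_sameCycle_classes σ, Fintype.prod_sum]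
  refine sum_congr rfl fun G _ => ?_
  rw [Finset.prod_comp (fun O => w (G O)) (⟦·⟧),
    image_univ_of_surjective Quotient.mk_surjective]

theorem sum_sign_filter_comp_eq_self {K : Type*} [DecidableEq K] (F : α → K) :
    ∑ σ ∈ univ.filter fun σ : Perm α => F ∘ σ = F, (sign σ : ℤ) =
      if F.Injective then 1 else 0 := by
  split_ifs with hF
  · rw [sum_eq_single_of_mem 1 (by simp) fun σ hσ hne => ?_]
    · simp
    · have hσ : F ∘ σ = F := (mem_filter.mp hσ).2
      exact absurd (coe_fn_injective (hF.comp_left (hσ.trans (F.comp_id).symm :))) hne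
  · obtain ⟨p, q, hpq, hne⟩ := Function.not_injective_iff.mp hF
    have hswap : F ∘ swap p q = F := by
      ext a
      rw [Function.comp_apply, swap_apply_def]
      split_ifs <;> simp_all
    have h : ∑ σ ∈ univ.filter fun σ : Perm α => F ∘ σ = F, (sign σ : ℤ) =
        ∑ σ ∈ univ.filter fun σ : Perm α => F ∘ σ = F, (sign (σ * swap p q) : ℤ) := by
      refine sum_nbij' (· * swap p q) (· * swap p q) (fun σ hσ => ?_) (fun σ hσ => ?_)
        (fun σ _ => by simp [mul_assoc]) (fun σ _ => by simp [mul_assoc])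
        (fun σ _ => by simp [mul_assoc])
      all_goals
        simp only [mem_filter, mem_univ, true_and] at hσ ⊢
        rw [coe_mul, ← Function.comp_assoc, hσ, hswap]
    simp only [sign_mul, sign_swap hne, Units.val_neg, mul_neg, mul_one, sum_neg_distrib] at h
    omega

theorem sign_eq_prod_parts_partition {R : Type*} [CommRing R] (σ : Perm α) :
    ((sign σ : ℤ) : R) = (σ.partition.parts.map fun r => (-1 : R) ^ (r + 1)).prod := by
  rw [parts_partition, Multiset.map_add, Multiset.prod_add, Multiset.map_replicate,
    Multiset.prod_replicate, neg_one_pow_two, one_pow, mul_one, sign_of_cycleType',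
    ← Units.coeHom_apply, map_multiset_prod, Int.cast_multiset_prod, Multiset.map_map,
    Multiset.map_map]
  congr 1
  exact Multiset.map_congr rfl fun r _ => by simp [pow_succ]

theorem sum_sign_mul_prod_psum_eq_factorial_mul_esymm {R K : Type*} [CommRing R] [Fintype K]
    [DecidableEq K] (w : K → R) :
    ∑ σ : Perm α,
        ((sign σ : ℤ) : R) * (σ.partition.parts.map fun r => ∑ k, w k ^ r).prod =
      (Fintype.card α).factorial * (univ.val.map w).esymm (Fintype.card α) := by
  rw [← Fintype.sum_injective_prod_eq_factorial_mul_esymm, sum_filter]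
  simp_rw [← sum_prod_filter_comp_eq_self, mul_sum, sum_filter]
  rw [sum_comm]
  refine sum_congr rfl fun F _ => ?_
  rw [← sum_filter, ← sum_mul, ← Int.cast_sum, sum_sign_filter_comp_eq_self]
  split_ifs <;> simp

end Equiv.Perm

theorem fullCycleType_eq_parts_partition {n : ℕ} (σ : Equiv.Perm (Fin n)) :
    fullCycleType σ = σ.partition.parts := by
  rw [fullCycleType, Equiv.Perm.parts_partition, Equiv.Perm.sum_cycleType, Fintype.card_fin]

/-- The `χ_y`-genus of symmetric products of a genus-`g` curve, algebraic form: in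
`ℚ[y]`, the cycle-index average `(1/n!) ∑_{σ ∈ Sₙ} ∏_{r ∈ full cycle type of σ}
(1 − g)(1 + (−y)^r)` equals the coefficient of `tⁿ` in `((1 − t)(1 + y·t))^{g−1}`,
computed in `(ℚ[y])[t]`. -/
theorem chi_y_genus_symmetricProduct (g n : ℕ) (hg : 1 ≤ g) :
    (↑n.factorial : ℚ)⁻¹ •
        ∑ σ : Equiv.Perm (Fin n),
          ((fullCycleType σ).map fun r =>
            ((1 : Polynomial ℚ) - (g : Polynomial ℚ)) *
              (1 + (-(Polynomial.X : Polynomial ℚ)) ^ r)).prod =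
      Polynomial.coeff
        ((((1 : Polynomial (Polynomial ℚ)) - Polynomial.X) *
            (1 + Polynomial.C (Polynomial.X : Polynomial ℚ) * Polynomial.X)) ^ (g - 1)) n := by
  obtain ⟨m, rfl⟩ := Nat.exists_eq_add_of_le' hg
  let v : Fin m ⊕ Fin m → ℚ[X] := Sum.elim (fun _ => X) (fun _ => -1)
  have factor (r : ℕ) :
      (1 - ((m + 1 : ℕ) : ℚ[X])) * (1 + (-X) ^ r) = (-1) ^ (r + 1) * ∑ k, v k ^ r := by
    have power_sum : ∑ k, v k ^ r = (m : ℚ[X]) * X ^ r + (m : ℚ[X]) * (-1) ^ r := by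
      simp [v, Fintype.sum_sum_type]
    have neg_one_pow_sq : ((-1 : ℚ[X]) ^ r) ^ 2 = 1 := by
      rw [← pow_mul, pow_mul', neg_one_sq, one_pow]
    rw [power_sum, neg_pow]
    push_cast
    linear_combination (m : ℚ[X]) * neg_one_pow_sq
  have generating_function :
      ((1 - X) * (1 + C X * X)) ^ m = ∏ k, (1 + C (v k) * X) := by
    simp only [v, Fintype.prod_sum_type, Sum.elim_inl, Sum.elim_inr, prod_const, card_univ,
      Fintype.card_fin, map_neg, map_one]
    rw [mul_pow, mul_comm]
    congr 2
    ring
  calc _ = (n.factorial : ℚ)⁻¹ • ∑ σ : Equiv.Perm (Fin n),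
          ((Equiv.Perm.sign σ : ℤ) : ℚ[X]) *
            (σ.partition.parts.map fun r => ∑ k, v k ^ r).prod := by
        simp_rw [fullCycleType_eq_parts_partition, factor, Multiset.prod_map_mul,
          Equiv.Perm.sign_eq_prod_parts_partition]
    _ = (univ.val.map v).esymm n := by
        rw [Equiv.Perm.sum_sign_mul_prod_psum_eq_factorial_mul_esymm, Fintype.card_fin,
          ← nsmul_eq_mul, ← Nat.cast_smul_eq_nsmul ℚ, smul_smul,
          inv_mul_cancel₀ (by positivity), one_smul]
    _ = _ := by rw [Nat.add_sub_cancel, generating_function, prod_one_add_C_mul_X_coeff]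
end
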